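/- arXiv:2507.04138 — 7 statements merged into one kernel-verified Lean document; each statement's English description precedes it below -/
import Mathlib

section
/- Let X be a Polish group with multiplication μ : X × X → X. A subset U ⊆ X is open if and only if μ⁻¹(U) is a countable union of rectangles A × B with A, B Borel subsets of X. -/
/-!
Openness of `U` gives openness of `μ⁻¹(U)`, which in a second-countable product is a countable
union of products of basic open sets. Conversely, fix `x ∈ U`. The sets
`Cₙ = Aₙ ∩ {a | a⁻¹ x ∈ Bₙ}` cover `X`, so by the Baire category theorem some `Cₙ` is not meagre.
Since `Cₙ Cₙ⁻¹ x ⊆ Aₙ Bₙ ⊆ U`, Pettis' theorem (`C C⁻¹` is a neighbourhood of `1` for every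
non-meagre Baire-measurable `C`) makes `U` a neighbourhood of `x`.
-/

open Set Filter Topology TopologicalSpace Pointwise

theorem IsOpen.exists_eq_iUnion_prod {X Y : Type*} [TopologicalSpace X] [TopologicalSpace Y]
    [SecondCountableTopology X] [SecondCountableTopology Y] {W : Set (X × Y)} (hW : IsOpen W) :
    ∃ (A : ℕ → Set X) (B : ℕ → Set Y), (∀ n, IsOpen (A n)) ∧ (∀ n, IsOpen (B n)) ∧
      W = ⋃ n, A n ×ˢ B n := by
  obtain ⟨bX, hbXc, -, hbX⟩ := exists_countable_basis X
  obtain ⟨bY, hbYc, -, hbY⟩ := exists_countable_basis Y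
  -- `∅` is added to both bases so that the family below is nonempty even when `W = ∅`.
  have hbX' : ∀ s ∈ insert ∅ bX, IsOpen s :=
    forall_mem_insert.2 ⟨isOpen_empty, fun _ => hbX.isOpen⟩
  have hbY' : ∀ t ∈ insert ∅ bY, IsOpen t :=
    forall_mem_insert.2 ⟨isOpen_empty, fun _ => hbY.isOpen⟩
  set F : Set (Set X × Set Y) := {p | p.1 ∈ insert ∅ bX ∧ p.2 ∈ insert ∅ bY ∧ p.1 ×ˢ p.2 ⊆ W}
  have hFc : F.Countable :=
    ((hbXc.insert ∅).prod (hbYc.insert ∅)).mono fun _ hp => mk_mem_prod hp.1 hp.2.1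
  have hF : ((∅, ∅) : Set X × Set Y) ∈ F := ⟨mem_insert _ _, mem_insert _ _, by simp⟩
  obtain ⟨f, hf⟩ := hFc.exists_eq_range (nonempty_of_mem hF)
  have hfF n : f n ∈ F := hf ▸ mem_range_self n
  refine ⟨fun n => (f n).1, fun n => (f n).2, fun n => hbX' _ (hfF n).1,
    fun n => hbY' _ (hfF n).2.1, ?_⟩
  refine Subset.antisymm (fun z hz => ?_) (iUnion_subset fun n => (hfF n).2.2)
  obtain ⟨_, ⟨s, hs, t, ht, rfl⟩, hzst, hstW⟩ := (hbX.prod hbY).exists_subset_of_mem_open hz hW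
  obtain ⟨n, hn⟩ : (s, t) ∈ range f := hf ▸ ⟨mem_insert_of_mem _ hs, mem_insert_of_mem _ ht, hstW⟩
  exact mem_iUnion.2 ⟨n, by simpa [hn] using hzst⟩

theorem Filter.EventuallyEq.nonempty_of_isOpen {X : Type*} [TopologicalSpace X] [BaireSpace X]
    {s t : Set X} (h : s =ᶠ[residual X] t) (ht : IsOpen t) (hne : t.Nonempty) : s.Nonempty := by
  obtain ⟨y, hyt, hst⟩ := (dense_of_mem_residual h).inter_open_nonempty t ht hne
  exact ⟨y, (show (y ∈ s) = (y ∈ t) from hst).mpr hyt⟩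

section TopologicalGroup

variable {X : Type*} [TopologicalSpace X] [Group X] [IsTopologicalGroup X] [BaireSpace X]

theorem BaireMeasurableSet.mul_inv_mem_nhds_one {C : Set X} (hC : BaireMeasurableSet C)
    (hm : ¬IsMeagre C) : C * C⁻¹ ∈ 𝓝 (1 : X) := by
  obtain ⟨V, hVo, hCV⟩ := hC.residualEq_isOpen
  obtain ⟨u, hu⟩ : V.Nonempty := by
    rw [nonempty_iff_ne_empty]
    rintro rfl
    exact hm (eventuallyEq_empty.1 hCV)
  have hVu : (· * u) ⁻¹' V ∈ 𝓝 (1 : X) :=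
    (continuous_mul_const u).continuousAt.preimage_mem_nhds (by simpa using hVo.mem_nhds hu)
  filter_upwards [hVu] with g hg
  -- `C ∩ g C` agrees with the open set `V ∩ g V ∋ g u` up to a meagre set, so it is nonempty.
  have htr : Tendsto (g⁻¹ * ·) (residual X) (residual X) :=
    tendsto_residual_of_isOpenMap (continuous_const_mul _) (Homeomorph.mulLeft _).isOpenMap
  obtain ⟨y, hyC, hgyC⟩ : (C ∩ (g⁻¹ * ·) ⁻¹' C).Nonempty :=
    (hCV.inter (hCV.comp_tendsto htr)).nonempty_of_isOpen
      (hVo.inter (hVo.preimage (continuous_const_mul _)))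
      ⟨g * u, hg, show g⁻¹ * (g * u) ∈ V by simpa using hu⟩
  exact ⟨y, hyC, (g⁻¹ * y)⁻¹, by simpa using hgyC, by group⟩

theorem isOpen_of_preimage_mul_eq_iUnion_prod {ι : Type*} [Countable ι] {U : Set X}
    {A B : ι → Set X} (hA : ∀ i, BaireMeasurableSet (A i)) (hB : ∀ i, BaireMeasurableSet (B i))
    (hU : (fun p : X × X => p.1 * p.2) ⁻¹' U = ⋃ i, A i ×ˢ B i) : IsOpen U := by
  refine isOpen_iff_mem_nhds.2 fun x hx => ?_
  let C i := A i ∩ (fun a => a⁻¹ * x) ⁻¹' B i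
  have hmem : ∀ a b, a * b ∈ U ↔ ∃ i, a ∈ A i ∧ b ∈ B i := fun a b => by
    simpa using congrArg ((a, b) ∈ ·) hU
  have hcover : ⋃ i, C i = univ :=
    eq_univ_of_forall fun a => mem_iUnion.2 ((hmem a (a⁻¹ * x)).1 (by simpa using hx))
  obtain ⟨i, hi⟩ : ∃ i, ¬IsMeagre (C i) := by
    by_contra! h
    exact not_isMeagre_of_isOpen isOpen_univ univ_nonempty (hcover ▸ isMeagre_iUnion h)
  let φ : X ≃ₜ X := (Homeomorph.inv X).trans (Homeomorph.mulRight x)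
  have hCi : BaireMeasurableSet (C i) := (hA i).inter ((hB i).preimage φ.continuous φ.isOpenMap)
  have hsub : C i * (C i)⁻¹ ⊆ (· * x) ⁻¹' U := by
    rintro _ ⟨a, ha, b, hb, rfl⟩
    rw [Set.mem_inv] at hb
    simpa [mul_assoc] using (hmem a (b⁻¹⁻¹ * x)).2 ⟨i, ha.1, hb.2⟩
  rw [← map_mul_right_nhds_one x]
  exact mem_map.2 (mem_of_superset (hCi.mul_inv_mem_nhds_one hi) hsub)

end TopologicalGroup

/-- In a Polish group `X` with multiplication `μ : X × X → X`,
a set `U ⊆ X` is open iff `μ⁻¹(U)` is a countable union of Borel rectangles. -/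
theorem stmt_0 {X : Type*} [TopologicalSpace X] [PolishSpace X] [Group X]
    [IsTopologicalGroup X] [MeasurableSpace X] [BorelSpace X] (U : Set X) :
    IsOpen U ↔
      ∃ A B : ℕ → Set X, (∀ n, MeasurableSet (A n)) ∧ (∀ n, MeasurableSet (B n)) ∧
        (fun p : X × X => p.1 * p.2) ⁻¹' U = ⋃ n, A n ×ˢ B n := by
  constructor
  · intro hU
    obtain ⟨A, B, hA, hB, hAB⟩ := (hU.preimage continuous_mul).exists_eq_iUnion_prod
    exact ⟨A, B, fun n => (hA n).measurableSet, fun n => (hB n).measurableSet, hAB⟩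
  · rintro ⟨A, B, hA, hB, hAB⟩
    exact isOpen_of_preimage_mul_eq_iUnion_prod (fun n => (hA n).baireMeasurableSet)
      (fun n => (hB n).baireMeasurableSet) hAB
end

section
/- Let p : X → Y be a Borel map between standard Borel spaces, (U_i)_{i∈I} a countable family of Borel subsets of X, A ⊆ X analytic (Σ¹₁), and C_i ⊆ Y coanalytic (Π¹₁) sets such that A ⊆ ⋃_i (p⁻¹(C_i) ∩ U_i). Then there exist Borel sets B_i ⊆ C_i with A ⊆ ⋃_i (p⁻¹(B_i) ∩ U_i). -/
open MeasureTheory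

namespace KunugiNovikovAux

open Set Function PiNat

variable {α : Type*}

/-- A family of sets is *Borel-separated* if it admits Borel hulls with empty intersection. -/
def NSep [MeasurableSpace α] (t : ℕ → Set α) : Prop :=
  ∃ B : ℕ → Set α, (∀ i, MeasurableSet (B i)) ∧ (∀ i, t i ⊆ B i) ∧ (⋂ i, B i) = ∅

lemma NSep.mono [MeasurableSpace α] {t t' : ℕ → Set α} (h : ∀ i, t' i ⊆ t i) (ht : NSep t) :
    NSep t' :=
  let ⟨B, h1, h2, h3⟩ := ht; ⟨B, h1, fun i => (h i).trans (h2 i), h3⟩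

/-- Separation is preserved by countable unions in one slot. -/
lemma NSep.iUnion_update [MeasurableSpace α] (t : ℕ → Set α) (i0 : ℕ) (S : ℕ → Set α)
    (h : ∀ k, NSep (update t i0 (S k))) : NSep (update t i0 (⋃ k, S k)) := by
  choose B hBm hBs hBe using h
  classical
  refine ⟨fun j => if j = i0 then ⋃ k, B k i0 else ⋂ k, B k j, ?_, ?_, ?_⟩
  · intro j
    by_cases hj : j = i0
    · simpa only [if_pos hj] using MeasurableSet.iUnion fun k => hBm k i0
    · simpa only [if_neg hj] using MeasurableSet.iInter fun k => hBm k j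
  · intro j
    rcases eq_or_ne j i0 with rfl | hj
    · simp only [if_pos rfl, update_self]
      exact iUnion_mono fun k => by simpa using (hBs k j).trans_eq' (by simp)
    · simp only [if_neg hj, update_of_ne hj]
      exact subset_iInter fun k => by simpa [update_of_ne hj] using hBs k j
  · ext y
    simp only [mem_iInter, mem_empty_iff_false, iff_false]
    intro hy
    have hy0 := hy i0
    rw [if_pos rfl] at hy0
    obtain ⟨k, hk⟩ := mem_iUnion.1 hy0
    have : y ∈ ⋂ j, B k j := by
      refine mem_iInter.2 fun j => ?_
      rcases eq_or_ne j i0 with rfl | hj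
      · exact hk
      · have := hy j
        rw [if_neg hj] at this
        exact mem_iInter.1 this k
    rw [hBe k] at this
    exact this


lemma exists_extension [MeasurableSpace α] {g : ℕ → (ℕ → ℕ) → α}
    (σ : ℕ → ℕ → ℕ) (L : ℕ → ℕ) (i0 : ℕ)
    (h : ¬ NSep (fun i => g i '' cylinder (σ i) (L i))) :
    ∃ y ∈ cylinder (σ i0) (L i0),
      ¬ NSep (update (fun i => g i '' cylinder (σ i) (L i)) i0
        (g i0 '' cylinder y (L i0 + 1))) := by
  contrapose! h
  have e : (fun i => g i '' cylinder (σ i) (L i)) =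
      update (fun i => g i '' cylinder (σ i) (L i)) i0
        (⋃ k, g i0 '' cylinder (update (σ i0) (L i0) k) (L i0 + 1)) := by
    rw [← image_iUnion, iUnion_cylinder_update (σ i0) (L i0), update_eq_self]
  rw [e]
  exact NSep.iUnion_update _ _ _ fun k => h _ (update_mem_cylinder _ _ _)


/-- **Novikov separation theorem**, for ranges of continuous maps from the Baire space. -/
theorem nsep_range_of_iInter_empty [TopologicalSpace α] [T2Space α] [MeasurableSpace α]
    [OpensMeasurableSpace α] {g : ℕ → (ℕ → ℕ) → α} (hg : ∀ i, Continuous (g i))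
    (h : (⋂ i, range (g i)) = ∅) : NSep (fun i => range (g i)) := by
  by_contra hsep
  classical
  -- the type of states of the construction: families of cylinders whose images are unseparated
  let A := { q : ℕ → (ℕ → ℕ) × ℕ //
      ¬ NSep (fun i => g i '' cylinder (q i).1 (q i).2) }
  -- one step of the construction, refining slot `(Nat.unpair s).1`
  have step : ∀ (s : ℕ) (a : A), ∃ b : A,
      (∀ i, i ≠ (Nat.unpair s).1 → b.1 i = a.1 i) ∧
      (b.1 (Nat.unpair s).1).2 = (a.1 (Nat.unpair s).1).2 + 1 ∧
      (b.1 (Nat.unpair s).1).1 ∈ cylinder (a.1 (Nat.unpair s).1).1 (a.1 (Nat.unpair s).1).2 := by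
    rintro s ⟨q, hq⟩
    set i0 := (Nat.unpair s).1
    obtain ⟨y, hy, hns⟩ := exists_extension (fun i => (q i).1) (fun i => (q i).2) i0 hq
    have e : (fun i => g i '' cylinder (update q i0 (y, (q i0).2 + 1) i).1
        (update q i0 (y, (q i0).2 + 1) i).2) =
        update (fun i => g i '' cylinder (q i).1 (q i).2) i0
          (g i0 '' cylinder y ((q i0).2 + 1)) := by
      funext i
      rcases eq_or_ne i i0 with rfl | hi
      · simp
      · simp [update_of_ne hi]
    refine ⟨⟨update q i0 (y, (q i0).2 + 1), by rw [e]; exact hns⟩, ?_, ?_, ?_⟩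
    · intro i hi; simp [update_of_ne hi]
    · simp
    · simpa using hy
  choose F hF1 hF2 hF3 using step
  -- initial state: full ranges
  have h0 : ¬ NSep (fun i => g i '' cylinder ((fun _ : ℕ => 0) : ℕ → ℕ) 0) := by
    simpa [cylinder_zero, image_univ] using hsep
  let a0 : A := ⟨fun _ => (fun _ => 0, 0), h0⟩
  -- iterate
  let P : ℕ → A := fun s => Nat.rec a0 (fun n ih => F n ih) s
  have Psucc : ∀ s, P (s + 1) = F s (P s) := fun s => rfl
  set L : ℕ → ℕ → ℕ := fun s i => ((P s).1 i).2 with hL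
  set xs : ℕ → ℕ → ℕ → ℕ := fun s i => ((P s).1 i).1 with hxs
  -- lengths evolution
  have Lsucc : ∀ s i, L (s + 1) i = if i = (Nat.unpair s).1 then L s i + 1 else L s i := by
    intro s i
    rcases eq_or_ne i (Nat.unpair s).1 with rfl | hi
    · simp only [hL, Psucc, if_pos rfl]; exact hF2 s (P s)
    · simp only [hL, Psucc, if_neg hi, hF1 s (P s) i hi]
  have Lmono : ∀ i, Monotone fun s => L s i := by
    intro i
    apply monotone_nat_of_le_succ
    intro s
    rw [Lsucc]
    split <;> omega
  -- coordinates stabilize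
  have stab1 : ∀ s i k, k < L s i → xs (s + 1) i k = xs s i k := by
    intro s i k hk
    rcases eq_or_ne i (Nat.unpair s).1 with rfl | hi
    · have := hF3 s (P s)
      rw [mem_cylinder_iff] at this
      exact this k hk
    · simp only [hxs, Psucc, hF1 s (P s) i hi]
  have stab : ∀ i k s s', s ≤ s' → k < L s i → xs s' i k = xs s i k := by
    intro i k s s' hss' hk
    induction s', hss' using Nat.le_induction with
    | base => rfl
    | succ n hn ih => rw [stab1 n i k (lt_of_lt_of_le hk (Lmono i hn)), ih]
  -- lengths are unbounded
  have unb : ∀ i m, ∃ s, m ≤ L s i := by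
    intro i m
    induction m with
    | zero => exact ⟨0, Nat.zero_le _⟩
    | succ m ih =>
      obtain ⟨s, hs⟩ := ih
      refine ⟨Nat.pair i s + 1, ?_⟩
      have h1 : L (Nat.pair i s + 1) i = L (Nat.pair i s) i + 1 := by
        rw [Lsucc]; simp [Nat.unpair_pair]
      have h2 : L s i ≤ L (Nat.pair i s) i := Lmono i (Nat.right_le_pair i s)
      omega
  choose S hS using fun i k => unb i (k + 1)
  -- the limit points
  set x : ℕ → ℕ → ℕ := fun i k => xs (S i k) i k with hx
  have agree : ∀ s i k, k < L s i → x i k = xs s i k := by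
    intro s i k hk
    have h1 := stab i k s (max s (S i k)) (le_max_left _ _) hk
    have h2 := stab i k (S i k) (max s (S i k)) (le_max_right _ _) (hS i k)
    rw [hx]; dsimp only; rw [← h2, h1]
  -- the cylinders around the limit points are unseparated at every stage
  have M : ∀ s, ¬ NSep (fun i => g i '' cylinder (x i) (L s i)) := by
    intro s hns
    apply (P s).2
    convert hns using 3 with i
    have : x i ∈ cylinder (xs s i) (L s i) :=
      mem_cylinder_iff.2 fun k hk => agree s i k hk
    rw [mem_cylinder_iff_eq] at this
    rw [this]
  -- endgame
  set z : ℕ → α := fun i => g i (x i) with hz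
  have hne : ∃ j, z j ≠ z 0 := by
    by_contra hc
    push_neg at hc
    have : z 0 ∈ ⋂ i, range (g i) := mem_iInter.2 fun i => (hc i) ▸ mem_range_self (x i)
    rw [h] at this
    exact this
  obtain ⟨j, hj⟩ := hne
  have hj0 : j ≠ 0 := fun hj0 => hj (by rw [hj0])
  obtain ⟨u, v, u_open, v_open, hzu, hzv, huv⟩ :
      ∃ u v : Set α, IsOpen u ∧ IsOpen v ∧ z 0 ∈ u ∧ z j ∈ v ∧ Disjoint u v :=
    t2_separation hj.symm
  letI : MetricSpace (ℕ → ℕ) := metricSpaceNatNat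
  obtain ⟨εx, εxpos, hεx⟩ : ∃ εx > (0 : ℝ), Metric.ball (x 0) εx ⊆ g 0 ⁻¹' u :=
    Metric.mem_nhds_iff.1 ((hg 0).continuousAt.preimage_mem_nhds (u_open.mem_nhds hzu))
  obtain ⟨εy, εypos, hεy⟩ : ∃ εy > (0 : ℝ), Metric.ball (x j) εy ⊆ g j ⁻¹' v :=
    Metric.mem_nhds_iff.1 ((hg j).continuousAt.preimage_mem_nhds (v_open.mem_nhds hzv))
  obtain ⟨n, hn⟩ : ∃ n : ℕ, (1 / 2 : ℝ) ^ n < min εx εy :=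
    exists_pow_lt_of_lt_one (lt_min εxpos εypos) (by norm_num)
  have hsub0 : ∀ m, n ≤ m → g 0 '' cylinder (x 0) m ⊆ u := by
    intro m hm
    rw [image_subset_iff]
    refine ((cylinder_anti _ hm).trans ?_)
    refine Subset.trans ?_ hεx
    intro w hw
    rw [mem_cylinder_iff_dist_le] at hw
    exact lt_of_le_of_lt hw (hn.trans_le (min_le_left _ _))
  have hsubj : ∀ m, n ≤ m → g j '' cylinder (x j) m ⊆ v := by
    intro m hm
    rw [image_subset_iff]
    refine ((cylinder_anti _ hm).trans ?_)
    refine Subset.trans ?_ hεy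
    intro w hw
    rw [mem_cylinder_iff_dist_le] at hw
    exact lt_of_le_of_lt hw (hn.trans_le (min_le_right _ _))
  obtain ⟨s1, hs1⟩ := unb 0 n
  obtain ⟨s2, hs2⟩ := unb j n
  set s := max s1 s2
  have hL0 : n ≤ L s 0 := hs1.trans (Lmono 0 (le_max_left _ _))
  have hLj : n ≤ L s j := hs2.trans (Lmono j (le_max_right _ _))
  apply M s
  refine ⟨fun i => if i = 0 then u else if i = j then v else univ, ?_, ?_, ?_⟩
  · intro i
    by_cases h0 : i = 0
    · simpa [h0] using u_open.measurableSet
    · by_cases hj' : i = j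
      · simpa [h0, hj', hj0] using v_open.measurableSet
      · simp [h0, hj']
  · intro i
    by_cases h0 : i = 0
    · subst h0; simpa using hsub0 _ hL0
    · by_cases hj' : i = j
      · subst hj'; simpa [hj0] using hsubj _ hLj
      · simp [h0, hj']
  · apply eq_empty_of_forall_notMem
    intro w hw
    have h1 : w ∈ u := by simpa using mem_iInter.1 hw 0
    have h2 : w ∈ v := by simpa [hj0] using mem_iInter.1 hw j
    exact (disjoint_left.1 huv) h1 h2


/-- **Novikov separation** for countably many analytic sets. -/
theorem novikov {ι : Type*} [Countable ι] [TopologicalSpace α] [T2Space α] [MeasurableSpace α]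
    [OpensMeasurableSpace α] {s : ι → Set α} (hs : ∀ i, AnalyticSet (s i))
    (h : (⋂ i, s i) = ∅) :
    ∃ B : ι → Set α, (∀ i, MeasurableSet (B i)) ∧ (∀ i, s i ⊆ B i) ∧ (⋂ i, B i) = ∅ := by
  classical
  cases isEmpty_or_nonempty ι with
  | inl hι =>
    have : IsEmpty α := by
      rw [iInter_of_empty] at h
      exact univ_eq_empty_iff.1 h
    exact ⟨fun _ => ∅, fun i => MeasurableSet.empty, fun i => by simp [eq_empty_of_isEmpty (s i)],
      by simpa using eq_empty_of_isEmpty (univ : Set α)⟩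
  | inr hι =>
    obtain ⟨e, he⟩ := exists_surjective_nat ι
    -- first, Novikov for ℕ-indexed analytic families
    by_cases hemp : ∃ i, s i = ∅
    · obtain ⟨i0, hi0⟩ := hemp
      refine ⟨fun i => if i = i0 then ∅ else univ, ?_, ?_, ?_⟩
      · intro i
        by_cases hii : i = i0 <;> simp [hii]
      · intro i
        by_cases hii : i = i0
        · simp only [if_pos hii, hii, hi0]; exact Subset.rfl
        · simp [hii]
      · apply eq_empty_of_forall_notMem
        intro w hw
        simpa using mem_iInter.1 hw i0
    · push_neg at hemp
      have hsr : ∀ n : ℕ, ∃ g : (ℕ → ℕ) → α, Continuous g ∧ range g = s (e n) := by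
        intro n
        have h2 := hs (e n)
        rw [AnalyticSet] at h2
        rcases h2 with hh | ⟨f, hf, hfr⟩
        · exact absurd hh (nonempty_iff_ne_empty.1 (hemp (e n)))
        · exact ⟨f, hf, hfr⟩
      choose g hgc hgr using hsr
      have hint : (⋂ n, range (g n)) = ∅ := by
        apply eq_empty_of_forall_notMem
        intro w hw
        have : w ∈ ⋂ i, s i := by
          refine mem_iInter.2 fun i => ?_
          obtain ⟨n, rfl⟩ := he i
          rw [← hgr n]
          exact mem_iInter.1 hw n
        rw [h] at this; exact this
      obtain ⟨B', hB'm, hB's, hB'e⟩ := nsep_range_of_iInter_empty hgc hint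
      refine ⟨fun i => ⋂ n, if e n = i then B' n else univ, ?_, ?_, ?_⟩
      · intro i
        refine MeasurableSet.iInter fun n => ?_
        by_cases hni : e n = i
        · simpa [hni] using hB'm n
        · simp [hni]
      · intro i
        refine subset_iInter fun n => ?_
        by_cases hni : e n = i
        · rw [if_pos hni, ← hni, ← hgr n]; exact hB's n
        · simp [hni]
      · apply eq_empty_of_forall_notMem
        intro w hw
        have : w ∈ ⋂ n, B' n := by
          refine mem_iInter.2 fun n => ?_
          have := mem_iInter.1 (mem_iInter.1 hw (e n)) n
          simpa using this
        rw [hB'e] at this; exact this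

/-- Preimage of an analytic set under a Borel-measurable map between standard Borel
spaces is analytic. -/
theorem analyticSet_preimage {X Y : Type*}
    [TopologicalSpace X] [PolishSpace X] [MeasurableSpace X] [BorelSpace X]
    [TopologicalSpace Y] [PolishSpace Y] [MeasurableSpace Y] [BorelSpace Y]
    {p : X → Y} (hp : Measurable p) {s : Set Y} (hs : AnalyticSet s) :
    AnalyticSet (p ⁻¹' s) := by
  have hW : MeasurableSet {q : X × Y | p q.1 = q.2} := by
    have : {q : X × Y | p q.1 = q.2} = (fun q : X × Y => (p q.1, q.2)) ⁻¹' {r : Y × Y | r.1 = r.2} := by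
      ext q; simp
    rw [this]
    exact ((hp.comp measurable_fst).prodMk measurable_snd)
      (isClosed_diagonal.measurableSet)
  have hWa : AnalyticSet {q : X × Y | p q.1 = q.2} := hW.analyticSet
  have hS2 : AnalyticSet ((Prod.snd : X × Y → Y) ⁻¹' s) := hs.preimage continuous_snd
  have hinter : AnalyticSet ({q : X × Y | p q.1 = q.2} ∩ (Prod.snd ⁻¹' s)) := by
    rw [inter_eq_iInter]
    exact AnalyticSet.iInter fun b => by cases b <;> simpa
  have him := hinter.image_of_continuous (continuous_fst : Continuous (Prod.fst : X × Y → X))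
  convert him using 1
  ext x
  constructor
  · intro hx
    exact ⟨(x, p x), ⟨rfl, hx⟩, rfl⟩
  · rintro ⟨⟨x', y⟩, ⟨hq1, hq2⟩, rfl⟩
    simp only [mem_setOf_eq] at hq1
    simpa [hq1] using hq2


end KunugiNovikovAux

open KunugiNovikovAux Set Function

/-- Kunugi–Novikov reflection. If `p : X → Y` is Borel between
standard Borel (Polish) spaces, `(U_i)` a countable family of Borel sets in `X`,
`A ⊆ X` analytic, and `C_i ⊆ Y` coanalytic with `A ⊆ ⋃ i, p⁻¹(C_i) ∩ U_i`, then
there are Borel `B_i ⊆ C_i` with `A ⊆ ⋃ i, p⁻¹(B_i) ∩ U_i`. -/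
theorem stmt_3 {X Y : Type*}
    [TopologicalSpace X] [PolishSpace X] [MeasurableSpace X] [BorelSpace X]
    [TopologicalSpace Y] [PolishSpace Y] [MeasurableSpace Y] [BorelSpace Y]
    {ι : Type*} [Countable ι]
    (p : X → Y) (hp : Measurable p)
    (U : ι → Set X) (hU : ∀ i, MeasurableSet (U i))
    (A : Set X) (hA : AnalyticSet A)
    (C : ι → Set Y) (hC : ∀ i, AnalyticSet (C i)ᶜ)
    (hsub : A ⊆ ⋃ i, p ⁻¹' (C i) ∩ U i) :
    ∃ B : ι → Set Y, (∀ i, MeasurableSet (B i)) ∧ (∀ i, B i ⊆ C i) ∧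
      A ⊆ ⋃ i, p ⁻¹' (B i) ∩ U i := by
  classical
  -- the auxiliary analytic family in `X`, indexed by `Option ι`
  set s : Option ι → Set X := fun o => o.elim A fun i => p ⁻¹' (C i)ᶜ ∪ (U i)ᶜ with hs
  have hsa : ∀ o, AnalyticSet (s o) := by
    rintro (_ | i)
    · exact hA
    · show AnalyticSet (p ⁻¹' (C i)ᶜ ∪ (U i)ᶜ)
      rw [union_eq_iUnion]
      refine AnalyticSet.iUnion fun b => ?_
      cases b
      · exact (hU i).compl.analyticSet
      · exact analyticSet_preimage hp (hC i)
  have hse : (⋂ o, s o) = ∅ := by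
    apply eq_empty_of_forall_notMem
    intro x hx
    have hxA : x ∈ A := mem_iInter.1 hx none
    obtain ⟨i, hi⟩ := mem_iUnion.1 (hsub hxA)
    have h12 : x ∈ p ⁻¹' (C i)ᶜ ∪ (U i)ᶜ := mem_iInter.1 hx (some i)
    rcases h12 with h1 | h2
    · exact h1 hi.1
    · exact h2 hi.2
  obtain ⟨V, hVm, hVs, hVe⟩ := novikov hsa hse
  -- for each `i`, separate `(C i)ᶜ` from `p '' (V (some i))ᶜ`
  have hdisj : ∀ i, Disjoint ((C i)ᶜ) (p '' (V (some i))ᶜ) := by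
    intro i
    rw [disjoint_right]
    rintro y ⟨x, hx, rfl⟩ hyc
    exact hx (hVs (some i) (Or.inl hyc))
  have hQ : ∀ i, AnalyticSet (p '' (V (some i))ᶜ) := fun i =>
    (hVm (some i)).compl.analyticSet_image hp
  have hsep : ∀ i, ∃ E : Set Y, (C i)ᶜ ⊆ E ∧ Disjoint (p '' (V (some i))ᶜ) E ∧
      MeasurableSet E :=
    fun i => (hC i).measurablySeparable (hQ i) (hdisj i)
  choose E hE1 hE2 hE3 using hsep
  refine ⟨fun i => (E i)ᶜ, fun i => (hE3 i).compl, ?_, ?_⟩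
  · intro i
    rw [compl_subset_comm]
    exact hE1 i
  · intro x hxA
    by_contra hx
    have hx' : ∀ i, p x ∈ E i ∨ x ∉ U i := by
      intro i
      by_cases hE : p x ∈ E i
      · exact Or.inl hE
      · exact Or.inr fun hxU => hx (mem_iUnion.2 ⟨i, ⟨hE, hxU⟩⟩)
    have hmem : x ∈ ⋂ o, V o := by
      refine mem_iInter.2 fun o => ?_
      cases o with
      | none => exact hVs none hxA
      | some i =>
        by_contra hxv
        have hpx : p x ∈ p '' (V (some i))ᶜ := mem_image_of_mem p hxv
        have hpE : p x ∉ E i := disjoint_left.1 (hE2 i) hpx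
        have hxU : x ∉ U i := (hx' i).resolve_left hpE
        exact hxv (hVs (some i) (show x ∈ p ⁻¹' (C i)ᶜ ∪ (U i)ᶜ from Or.inr hxU))
    rw [hVe] at hmem
    exact hmem
end

section
/- Let p : X → Y be a Borel map between standard Borel spaces, (U_i) a countable family of Borel subsets of X, and A ⊆ X a Borel set such that for every y ∈ Y, the fiber A_y = A ∩ p⁻¹(y) is a union of some of the fibers (U_i)_y. Then there exist Borel sets B_i ⊆ Y such that A = ⋃_i (p⁻¹(B_i) ∩ U_i). -/
open Set Function PolishSpace PiNat TopologicalSpace MeasureTheory Filter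

namespace KunugiNovikov

variable {α : Type*}

/-- A countable family of sets can be enlarged to Borel sets with empty intersection. -/
def NSep [MeasurableSpace α] (C : ℕ → Set α) : Prop :=
  ∃ D : ℕ → Set α, (∀ n, MeasurableSet (D n)) ∧ (∀ n, C n ⊆ D n) ∧ ⋂ n, D n = ∅

lemma nsep_update_iUnion [MeasurableSpace α] {C : ℕ → Set α} (n0 : ℕ) (T : ℕ → Set α)
    (h : ∀ k, NSep (update C n0 (T k))) : NSep (update C n0 (⋃ k, T k)) := by
  classical
  choose D hDm hDc hDe using h
  refine ⟨fun n => if n = n0 then ⋃ k, D k n0 else ⋂ k, D k n, ?_, ?_, ?_⟩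
  · intro n; dsimp only; split
    · exact .iUnion fun k => hDm k n0
    · exact .iInter fun k => hDm k n
  · intro n
    dsimp only
    rcases eq_or_ne n n0 with hn | hn
    · rw [hn, update_self, if_pos rfl]
      exact iUnion_mono fun k => by simpa using hDc k n0
    · rw [update_of_ne hn, if_neg hn]
      refine subset_iInter fun k => ?_
      have := hDc k n
      rwa [update_of_ne hn] at this
  · ext x
    simp only [mem_iInter, mem_empty_iff_false, iff_false]
    intro hx
    have h0 := hx n0
    rw [if_pos rfl] at h0
    obtain ⟨k, hk⟩ := mem_iUnion.1 h0
    have hxk : x ∈ ⋂ n, D k n := by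
      refine mem_iInter.2 fun n => ?_
      rcases eq_or_ne n n0 with rfl | hn
      · exact hk
      · have h' := hx n
        rw [if_neg hn] at h'
        exact mem_iInter.1 h' k
    rw [hDe k] at hxk
    exact hxk

theorem nsep_ranges [TopologicalSpace α] [T2Space α] [MeasurableSpace α] [OpensMeasurableSpace α]
    (f : ℕ → (ℕ → ℕ) → α) (hf : ∀ n, Continuous (f n)) (h : ⋂ n, range (f n) = ∅) :
    NSep (fun n => range (f n)) := by
  classical
  by_contra hcon
  -- refinement step
  have I : ∀ (σ : ℕ → ℕ → ℕ) (ℓ : ℕ → ℕ) (n0 : ℕ),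
      ¬ NSep (fun n => f n '' cylinder (σ n) (ℓ n)) →
      ∃ x', x' ∈ cylinder (σ n0) (ℓ n0) ∧
        ¬ NSep (fun n => f n '' cylinder (update σ n0 x' n) (update ℓ n0 (ℓ n0 + 1) n)) := by
    intro σ ℓ n0
    contrapose!
    intro H
    set C : ℕ → Set α := fun n => f n '' cylinder (σ n) (ℓ n) with hC
    have hCrw : C = update C n0 (⋃ k, f n0 '' cylinder (update (σ n0) (ℓ n0) k) (ℓ n0 + 1)) := by
      funext n
      rcases eq_or_ne n n0 with rfl | hn
      · rw [update_self, hC]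
        simp only
        rw [← iUnion_cylinder_update (σ n) (ℓ n), image_iUnion]
      · rw [update_of_ne hn]
    rw [hCrw]
    refine nsep_update_iUnion n0 _ fun k => ?_
    have hk := H (update (σ n0) (ℓ n0) k) (update_mem_cylinder _ _ _)
    have : (fun n => f n '' cylinder
        (update σ n0 (update (σ n0) (ℓ n0) k) n) (update ℓ n0 (ℓ n0 + 1) n))
        = update C n0 (f n0 '' cylinder (update (σ n0) (ℓ n0) k) (ℓ n0 + 1)) := by
      funext n
      rcases eq_or_ne n n0 with rfl | hn
      · rw [update_self, update_self, update_self]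
      · rw [update_of_ne hn, update_of_ne hn, update_of_ne hn]
    rwa [this] at hk
  -- the schedule, visiting each index infinitely often
  set e : ℕ → ℕ := fun t => (Nat.unpair t).1 with he_def
  have he : ∀ n t0, ∃ t, t0 ≤ t ∧ e t = n := fun n t0 =>
    ⟨Nat.pair n t0, Nat.right_le_pair n t0, by simp [he_def]⟩
  -- states
  let A := {q : (ℕ → ℕ → ℕ) × (ℕ → ℕ) // ¬ NSep fun n => f n '' cylinder (q.1 n) (q.2 n)}
  have step : ∀ (t : ℕ) (q : A), ∃ q' : A,
      q'.1.2 = update q.1.2 (e t) (q.1.2 (e t) + 1) ∧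
      q'.1.1 (e t) ∈ cylinder (q.1.1 (e t)) (q.1.2 (e t)) ∧
      ∀ n, n ≠ e t → q'.1.1 n = q.1.1 n := by
    intro t q
    obtain ⟨x', hx', hns⟩ := I q.1.1 q.1.2 (e t) q.2
    refine ⟨⟨(update q.1.1 (e t) x', update q.1.2 (e t) (q.1.2 (e t) + 1)), hns⟩, rfl, ?_, ?_⟩
    · show update q.1.1 (e t) x' (e t) ∈ _
      rw [update_self]; exact hx'
    · intro n hn; exact update_of_ne hn _ _
  choose G hG1 hG2 hG3 using step
  have hcon0 : ¬ NSep fun n => f n '' cylinder ((fun _ _ => 0 : ℕ → ℕ → ℕ) n) ((fun _ => 0 : ℕ → ℕ) n) := by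
    simpa [cylinder_zero, image_univ] using hcon
  let p : ℕ → A := fun t => Nat.rec ⟨(fun _ _ => 0, fun _ => 0), hcon0⟩ (fun t ih => G t ih) t
  have prec : ∀ t, p (t + 1) = G t (p t) := fun t => rfl
  set σ : ℕ → ℕ → ℕ → ℕ := fun t => (p t).1.1 with hσ
  set L : ℕ → ℕ → ℕ := fun t => (p t).1.2 with hL
  -- monotonicity of lengths
  have Lsucc : ∀ t n, L t n ≤ L (t+1) n := by
    intro t n
    rw [hL]
    simp only [prec t, hG1 t (p t)]
    rcases eq_or_ne n (e t) with rfl | hn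
    · rw [update_self]; exact Nat.le_succ _
    · rw [update_of_ne hn]
  have Lmono : ∀ n s t, s ≤ t → L s n ≤ L t n := by
    intro n s t hst
    induction t, hst using Nat.le_induction with
    | base => exact le_rfl
    | succ t hst ih => exact ih.trans (Lsucc t n)
  -- unboundedness of lengths
  have Lunbdd : ∀ n N, ∃ t, N ≤ L t n := by
    intro n N
    induction N with
    | zero => exact ⟨0, Nat.zero_le _⟩
    | succ N ih =>
      obtain ⟨t, ht⟩ := ih
      obtain ⟨t', ht', het'⟩ := he n t
      refine ⟨t' + 1, ?_⟩
      have : L (t'+1) n = L t' n + 1 := by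
        rw [hL]; simp only [prec t', hG1 t' (p t')]
        rw [← het', update_self]
      rw [this]
      exact Nat.succ_le_succ (ht.trans (Lmono n t t' ht'))
  -- stability of coordinates
  have stab : ∀ n i s t, s ≤ t → i < L s n → σ t n i = σ s n i := by
    intro n i s t hst hi
    induction t, hst using Nat.le_induction with
    | base => rfl
    | succ t hst ih =>
      rcases eq_or_ne n (e t) with hn | hn
      · have hmem := hG2 t (p t)
        rw [← hn] at hmem
        have : σ (t+1) n i = σ t n i := by
          rw [hσ]
          simp only [prec t]
          exact mem_cylinder_iff.1 hmem i (lt_of_lt_of_le hi (Lmono n s t hst))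
        rw [this, ih]
      · have : σ (t+1) n = σ t n := by
          rw [hσ]; simp only [prec t]; exact hG3 t (p t) n hn
        rw [this, ih]
  -- the limit points
  have hT : ∀ n i, ∃ t, i < L t n := fun n i => Lunbdd n (i+1)
  choose T hT using hT
  set x : ℕ → ℕ → ℕ := fun n i => σ (T n i) n i with hx
  have xeq : ∀ t n i, i < L t n → x n i = σ t n i := by
    intro t n i hi
    rw [hx]
    have h1 := stab n i (T n i) (max t (T n i)) (le_max_right _ _) (hT n i)
    have h2 := stab n i t (max t (T n i)) (le_max_left _ _) hi
    simp only
    rw [← h1, h2]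
  have cyl_eq : ∀ t n, cylinder (x n) (L t n) = cylinder (σ t n) (L t n) := by
    intro t n
    ext z
    simp only [mem_cylinder_iff]
    constructor
    · intro hz i hi; rw [hz i hi, xeq t n i hi]
    · intro hz i hi; rw [hz i hi, xeq t n i hi]
  have M : ∀ t, ¬ NSep fun n => f n '' cylinder (x n) (L t n) := by
    intro t
    have := (p t).2
    intro hns
    apply this
    convert hns using 2 with n
    rw [cyl_eq t n]
  -- two distinct limit values
  have hz : ∃ n m, f n (x n) ≠ f m (x m) := by
    by_contra hz
    push_neg at hz
    have : f 0 (x 0) ∈ ⋂ n, range (f n) :=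
      mem_iInter.2 fun n => (hz 0 n) ▸ mem_range_self (x n)
    rw [h] at this
    exact this
  obtain ⟨n, m, hnm⟩ := hz
  have hnm' : n ≠ m := fun h' => hnm (by rw [h'])
  obtain ⟨u, v, u_open, v_open, hu, hv, huv⟩ := t2_separation hnm
  letI : MetricSpace (ℕ → ℕ) := metricSpaceNatNat
  obtain ⟨εn, εnpos, hεn⟩ : ∃ ε : ℝ, ε > 0 ∧ Metric.ball (x n) ε ⊆ f n ⁻¹' u :=
    Metric.mem_nhds_iff.1 ((hf n).continuousAt.preimage_mem_nhds (u_open.mem_nhds hu))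
  obtain ⟨εm, εmpos, hεm⟩ : ∃ ε : ℝ, ε > 0 ∧ Metric.ball (x m) ε ⊆ f m ⁻¹' v :=
    Metric.mem_nhds_iff.1 ((hf m).continuousAt.preimage_mem_nhds (v_open.mem_nhds hv))
  obtain ⟨N, hN⟩ : ∃ N : ℕ, (1 / 2 : ℝ) ^ N < min εn εm :=
    exists_pow_lt_of_lt_one (lt_min εnpos εmpos) (by norm_num)
  obtain ⟨t1, ht1⟩ := Lunbdd n N
  obtain ⟨t2, ht2⟩ := Lunbdd m N
  set t := max t1 t2 with htdef
  have hLn : N ≤ L t n := ht1.trans (Lmono n t1 t (le_max_left _ _))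
  have hLm : N ≤ L t m := ht2.trans (Lmono m t2 t (le_max_right _ _))
  have key : ∀ (j : ℕ) (w : ℕ → ℕ) (εj : ℝ), N ≤ L t j → (1/2 : ℝ) ^ N < εj →
      cylinder w (L t j) ⊆ Metric.ball w εj := by
    intro j w εj hNj hεj z hzc
    rw [mem_cylinder_iff_dist_le] at hzc
    rw [Metric.mem_ball]
    calc dist z w ≤ (1/2 : ℝ) ^ (L t j) := hzc
      _ ≤ (1/2 : ℝ) ^ N := by
          apply pow_le_pow_of_le_one (by norm_num) (by norm_num) hNj
      _ < εj := hεj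
  apply M t
  refine ⟨fun j => if j = n then u else if j = m then v else univ, ?_, ?_, ?_⟩
  · intro j
    dsimp only
    split
    · exact u_open.measurableSet
    · split
      · exact v_open.measurableSet
      · exact MeasurableSet.univ
  · intro j
    dsimp only
    rcases eq_or_ne j n with rfl | hjn
    · rw [if_pos rfl, image_subset_iff]
      exact ((key j (x j) εn hLn (hN.trans_le (min_le_left _ _))).trans hεn)
    · rw [if_neg hjn]
      rcases eq_or_ne j m with rfl | hjm
      · rw [if_pos rfl, image_subset_iff]
        exact ((key j (x j) εm hLm (hN.trans_le (min_le_right _ _))).trans hεm)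
      · rw [if_neg hjm]; exact subset_univ _
  · apply eq_empty_of_subset_empty
    intro z hz
    have h1 : z ∈ u := by
      have h' := mem_iInter.1 hz n
      simp only [if_pos rfl] at h'
      exact h'
    have h2 : z ∈ v := by
      have h' := mem_iInter.1 hz m
      simp only [if_neg (Ne.symm hnm'), if_pos rfl] at h'
      exact h'
    exact (disjoint_left.1 huv h1) h2

/-- **Novikov's separation theorem** for `ℕ`-indexed families. -/
theorem nsep_of_analytic [TopologicalSpace α] [T2Space α] [MeasurableSpace α]
    [OpensMeasurableSpace α] {s : ℕ → Set α} (hs : ∀ n, AnalyticSet (s n))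
    (h : ⋂ n, s n = ∅) : NSep s := by
  classical
  by_cases hemp : ∃ n, s n = ∅
  · obtain ⟨n0, hn0⟩ := hemp
    refine ⟨fun n => if n = n0 then ∅ else univ, ?_, ?_, ?_⟩
    · intro n; dsimp only; split <;> simp
    · intro n
      dsimp only
      rcases eq_or_ne n n0 with rfl | hn
      · rw [if_pos rfl, hn0]
      · rw [if_neg hn]; exact subset_univ _
    · apply eq_empty_of_subset_empty
      intro z hz
      have h' := mem_iInter.1 hz n0
      rwa [if_pos rfl] at h'
  · push_neg at hemp
    have : ∀ n, ∃ f : (ℕ → ℕ) → α, Continuous f ∧ range f = s n := by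
      intro n
      have := hs n
      rw [MeasureTheory.AnalyticSet] at this
      rcases this with h' | ⟨f, hfc, hfr⟩
      · exact absurd h' (nonempty_iff_ne_empty.1 (hemp n))
      · exact ⟨f, hfc, hfr⟩
    choose f hfc hfr using this
    have hr : (fun n => range (f n)) = s := funext hfr
    have := nsep_ranges f hfc (by rw [hr]; exact h)
    rwa [hr] at this

/-- **Novikov's separation theorem**: countably many analytic sets with empty intersection
can be enlarged to Borel sets with empty intersection. -/
theorem novikov {ι : Type*} [Countable ι] [Nonempty ι] [TopologicalSpace α] [T2Space α]
    [MeasurableSpace α] [OpensMeasurableSpace α] {s : ι → Set α}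
    (hs : ∀ i, AnalyticSet (s i)) (h : ⋂ i, s i = ∅) :
    ∃ D : ι → Set α, (∀ i, MeasurableSet (D i)) ∧ (∀ i, s i ⊆ D i) ∧ ⋂ i, D i = ∅ := by
  obtain ⟨g, hg⟩ := exists_surjective_nat ι
  obtain ⟨E, hEm, hEc, hEe⟩ := nsep_of_analytic (s := fun n => s (g n)) (fun n => hs _)
    (by rw [hg.iInter_comp]; exact h)
  refine ⟨fun i => ⋂ (n) (_ : g n = i), E n,
    fun i => MeasurableSet.iInter fun n => MeasurableSet.iInter fun _ => hEm n, ?_, ?_⟩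
  · intro i
    refine subset_iInter fun n => subset_iInter fun hn => ?_
    rw [← hn]; exact hEc n
  · apply eq_empty_of_subset_empty
    intro z hz
    rw [← hEe]
    refine mem_iInter.2 fun n => ?_
    have := mem_iInter.1 hz (g n)
    exact mem_iInter.1 (mem_iInter.1 this n) rfl

end KunugiNovikov

/-- Kunugi–Novikov uniformization. If `p : X → Y` is Borel between
standard Borel spaces, `(U_i)` a countable family of Borel sets in `X`, and `A ⊆ X`
Borel such that each fiber `A_y` is a union of some of the fibers `(U_i)_y`, then
there are Borel `B_i ⊆ Y` with `A = ⋃ i, p⁻¹(B_i) ∩ U_i`. -/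
theorem stmt_4 {X Y : Type*} [MeasurableSpace X] [StandardBorelSpace X]
    [MeasurableSpace Y] [StandardBorelSpace Y]
    {ι : Type*} [Countable ι]
    (p : X → Y) (hp : Measurable p)
    (U : ι → Set X) (hU : ∀ i, MeasurableSet (U i))
    (A : Set X) (hA : MeasurableSet A)
    (hfib : ∀ y : Y, ∃ S : Set ι, A ∩ p ⁻¹' {y} = ⋃ i ∈ S, U i ∩ p ⁻¹' {y}) :
    ∃ B : ι → Set Y, (∀ i, MeasurableSet (B i)) ∧ A = ⋃ i, p ⁻¹' (B i) ∩ U i := by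
  classical
  rcases isEmpty_or_nonempty ι with hι | hι
  · -- no indices: every fiber of A is empty, hence A is empty
    have hAe : A = ∅ := by
      ext x
      simp only [mem_empty_iff_false, iff_false]
      intro hx
      obtain ⟨S, hS⟩ := hfib (p x)
      have : x ∈ A ∩ p ⁻¹' {p x} := ⟨hx, rfl⟩
      rw [hS] at this
      obtain ⟨_, ⟨i, _⟩, _⟩ := this
      exact hι.elim i
    exact ⟨fun _ => ∅, fun _ => MeasurableSet.empty, by simp [hAe]⟩
  · letI := upgradeStandardBorel Y
    -- the analytic "bad" sets in Y
    set F : ι → Set Y := fun i => p '' (U i \ A) with hF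
    have hFa : ∀ i, AnalyticSet (F i) := fun i =>
      MeasurableSet.analyticSet_image ((hU i).diff hA) hp
    -- key covering property of A
    have hcov : ∀ x ∈ A, ∃ i, x ∈ U i ∧ p x ∉ F i := by
      intro x hx
      obtain ⟨S, hS⟩ := hfib (p x)
      have hx' : x ∈ ⋃ i ∈ S, U i ∩ p ⁻¹' {p x} := by rw [← hS]; exact ⟨hx, rfl⟩
      obtain ⟨_, ⟨i, rfl⟩, hxU⟩ := hx'
      simp only [mem_iUnion, mem_inter_iff] at hxU
      obtain ⟨hiS, hxUi, -⟩ := hxU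
      refine ⟨i, hxUi, ?_⟩
      rintro ⟨x', ⟨hx'U, hx'A⟩, hpx'⟩
      have : x' ∈ ⋃ j ∈ S, U j ∩ p ⁻¹' {p x} :=
        mem_biUnion hiS ⟨hx'U, by simpa using hpx'⟩
      rw [← hS] at this
      exact hx'A this.1
    -- the analytic sets in X to which we apply Novikov's separation theorem
    letI := upgradeStandardBorel X
    set G : ι → Set X := fun i => (A ∩ p ⁻¹' (F i)) ∪ (A \ U i) with hG
    have hGa : ∀ i, AnalyticSet (G i) := by
      intro i
      have hunion : ∀ (s t : Set X), AnalyticSet s → AnalyticSet t → AnalyticSet (s ∪ t) := by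
        intro s t hs ht
        rw [union_eq_iUnion]
        exact AnalyticSet.iUnion (fun b => by cases b <;> simpa)
      apply hunion
      · -- A ∩ p⁻¹(F i) is the first-coordinate projection of a Borel set in X × X
        have hW : MeasurableSet {q : X × X | q.1 ∈ A ∧ (q.2 ∈ U i ∧ q.2 ∉ A) ∧ p q.1 = p q.2} := by
          apply MeasurableSet.inter
          · exact measurable_fst hA
          · apply MeasurableSet.inter
            · exact measurable_snd ((hU i).inter hA.compl)
            · exact ((hp.comp measurable_fst).prodMk (hp.comp measurable_snd))
                isClosed_diagonal.measurableSet
        have himg : A ∩ p ⁻¹' (F i) =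
            Prod.fst '' {q : X × X | q.1 ∈ A ∧ (q.2 ∈ U i ∧ q.2 ∉ A) ∧ p q.1 = p q.2} := by
          ext x
          constructor
          · rintro ⟨hxA, x', ⟨hx'U, hx'A⟩, hpx'⟩
            exact ⟨(x, x'), ⟨hxA, ⟨hx'U, hx'A⟩, hpx'.symm⟩, rfl⟩
          · rintro ⟨⟨x1, x2⟩, ⟨h1, ⟨h2, h3⟩, h4⟩, rfl⟩
            exact ⟨h1, ⟨x2, ⟨h2, h3⟩, h4.symm⟩⟩
        rw [himg]
        exact hW.analyticSet_image measurable_fst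
      · exact (hA.diff (hU i)).analyticSet
    have hGe : ⋂ i, G i = ∅ := by
      apply eq_empty_of_subset_empty
      intro x hx
      have hxA : x ∈ A := by
        have := mem_iInter.1 hx hι.some
        rcases this with h' | h'
        · exact h'.1
        · exact h'.1
      obtain ⟨i, hxU, hpx⟩ := hcov x hxA
      have := mem_iInter.1 hx i
      rcases this with h' | h'
      · exact hpx h'.2
      · exact h'.2 hxU
    obtain ⟨D, hDm, hDc, hDe⟩ := KunugiNovikov.novikov hGa hGe
    -- the Borel pieces of A
    set A' : ι → Set X := fun i => A \ D i with hA'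
    have hA'sub : ∀ i, A' i ⊆ (A ∩ p ⁻¹' (F i)ᶜ) ∩ U i := by
      intro i x hx
      have hxG : x ∉ G i := fun h => hx.2 (hDc i h)
      rw [hG] at hxG
      simp only [mem_union, mem_inter_iff, mem_diff, not_or, not_and, not_not] at hxG
      refine ⟨⟨hx.1, fun h => (hxG.1 hx.1 h)⟩, hxG.2 hx.1⟩
    have hA'cov : A = ⋃ i, A' i := by
      ext x
      constructor
      · intro hx
        by_contra hc
        simp only [mem_iUnion, hA', mem_diff, not_exists, not_and, not_not] at hc
        have : x ∈ ⋂ i, D i := mem_iInter.2 fun i => hc i hx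
        rw [hDe] at this
        exact this
      · rintro ⟨_, ⟨i, rfl⟩, hx⟩
        exact hx.1
    -- separate p(A' i) from F i by a Borel set
    have hsep : ∀ i, MeasurablySeparable (p '' (A' i)) (F i) := by
      intro i
      have hdisj : Disjoint (p '' (A' i)) (F i) := by
        rw [disjoint_left]
        rintro y ⟨x, hx, rfl⟩
        exact fun hyF => ((hA'sub i hx).1.2 : p x ∈ (F i)ᶜ) hyF
      exact (MeasurableSet.analyticSet_image (hA.diff (hDm i)) hp).measurablySeparable
        (hFa i) hdisj
    unfold MeasurablySeparable at hsep
    choose B hB1 hB2 hB3 using hsep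
    refine ⟨B, hB3, ?_⟩
    apply Subset.antisymm
    · intro x hx
      rw [hA'cov] at hx
      obtain ⟨_, ⟨i, rfl⟩, hxi⟩ := hx
      exact mem_iUnion.2 ⟨i, hB1 i ⟨x, hxi, rfl⟩, (hA'sub i hxi).2⟩
    · rintro x hx
      obtain ⟨_, ⟨i, rfl⟩, hxB, hxU⟩ := hx
      by_contra hxA
      have hmem : p x ∈ F i := ⟨x, ⟨hxU, hxA⟩, rfl⟩
      exact Set.disjoint_left.1 (hB2 i) hmem (show p x ∈ B i from hxB)
end

section
/- Let p : X → Y and q : Y → Z be continuous open maps between topological spaces, with X (q∘p)-fiberwise second-countable and p-fiberwise Baire. Then for any A ⊆ X with the Baire property in each (q∘p)-fiber: the set ∃*_p(A) = {y ∈ Y : A ∩ p⁻¹(y) is nonmeager in p⁻¹(y)} is Baire-measurable in each q-fiber, and ∃*_{q∘p}(A) = ∃*_q(∃*_p(A)). -/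
open Set

/-- The Baire category quantifier `∃*_p(A)`: the set of `y` such that
`A ∩ p⁻¹(y)` is nonmeager in the fiber `p⁻¹(y)` (with its subspace topology). -/
def fibNonmeager {X Y : Type*} [TopologicalSpace X] (p : X → Y) (A : Set X) : Set Y :=
  {y | ¬ IsMeagre (Subtype.val ⁻¹' A : Set (p ⁻¹' {y}))}

open Topology Filter TopologicalSpace

set_option maxHeartbeats 1000000

section Aux
variable {W V : Type*} [TopologicalSpace W] [TopologicalSpace V]

lemma isMeagre_iUnion' {ι : Sort*} [Countable ι] {s : ι → Set V}
    (h : ∀ i, IsMeagre (s i)) : IsMeagre (⋃ i, s i) := by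
  rw [IsMeagre, compl_iUnion]
  exact countable_iInter_mem.mpr h

lemma IsMeagre.union' {s t : Set V} (hs : IsMeagre s) (ht : IsMeagre t) : IsMeagre (s ∪ t) := by
  rw [IsMeagre, compl_union]; exact inter_mem hs ht

lemma IsNowhereDense.isMeagre' {s : Set V} (h : IsNowhereDense s) : IsMeagre s :=
  isMeagre_iff_countable_union_isNowhereDense.mpr
    ⟨{s}, by simpa, countable_singleton _, by simp⟩

lemma Homeomorph.isMeagre_preimage (e : W ≃ₜ V) {t : Set V} :
    IsMeagre (e ⁻¹' t) ↔ IsMeagre t := by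
  rw [IsMeagre, IsMeagre, ← preimage_compl, ← e.residual_map_eq, mem_map]

lemma isNowhereDense_diff {G D : Set V} (hG : IsOpen G) (hD : IsOpen D) (h : G ⊆ closure D) :
    IsNowhereDense (G \ D) := by
  rw [IsNowhereDense, eq_empty_iff_forall_notMem]
  intro x hx
  set O := interior (closure (G \ D)) with hO'
  have hO : IsOpen O := isOpen_interior
  have hOsub : O ⊆ closure (G \ D) := interior_subset
  have h1 : (O ∩ G).Nonempty :=
    mem_closure_iff.mp (closure_mono diff_subset (hOsub hx)) O hO hx
  obtain ⟨y, hyO, hyG⟩ := h1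
  have h2 : ((O ∩ G) ∩ D).Nonempty :=
    mem_closure_iff.mp (h hyG) (O ∩ G) (hO.inter hG) ⟨hyO, hyG⟩
  obtain ⟨w, ⟨hwO, -⟩, hwD⟩ := h2
  have h3 : ((O ∩ D) ∩ (G \ D)).Nonempty :=
    mem_closure_iff.mp (hOsub hwO) (O ∩ D) (hO.inter hD) ⟨hwO, hwD⟩
  obtain ⟨u, ⟨-, huD⟩, -, hnD⟩ := h3
  exact hnD huD

variable {f : W → V}

lemma fibNonmeager_mono {A B : Set W} (h : A ⊆ B) (f : W → V) :
    fibNonmeager f A ⊆ fibNonmeager f B :=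
  fun _ hv hm => hv (hm.mono (preimage_mono h))

lemma fibNonmeager_union (f : W → V) (A B : Set W) :
    fibNonmeager f (A ∪ B) ⊆ fibNonmeager f A ∪ fibNonmeager f B := by
  intro v hv
  rw [mem_union]
  by_contra h
  push_neg at h
  obtain ⟨h1, h2⟩ := h
  simp only [fibNonmeager, mem_setOf_eq, not_not] at h1 h2
  exact hv (by rw [preimage_union]; exact h1.union' h2)

lemma fibNonmeager_isOpen (hB : ∀ v, BaireSpace (f ⁻¹' {v})) {U : Set W} (hU : IsOpen U) :
    fibNonmeager f U = f '' U := by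
  ext v
  constructor
  · intro hv
    by_contra him
    apply hv
    have hempty : (Subtype.val ⁻¹' U : Set (f ⁻¹' {v})) = ∅ := by
      ext x
      simp only [mem_preimage, mem_empty_iff_false, iff_false]
      exact fun hxU => him ⟨x.1, hxU, x.2⟩
    rw [hempty]
    exact IsMeagre.empty
  · rintro ⟨x, hxU, hxv⟩
    intro hm
    haveI := hB v
    have hden : Dense ((Subtype.val ⁻¹' U : Set (f ⁻¹' {v}))ᶜ) := dense_of_mem_residual hm
    have hop : IsOpen (Subtype.val ⁻¹' U : Set (f ⁻¹' {v})) :=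
      hU.preimage continuous_subtype_val
    obtain ⟨y, hy1, hy2⟩ := hden.inter_open_nonempty _ hop ⟨⟨x, hxv⟩, hxU⟩
    exact hy2 hy1

lemma fibNonmeager_isMeagre_of_nwd [SecondCountableTopology W] (hc : Continuous f)
    (ho : IsOpenMap f) {F : Set W} (hclosed : IsClosed F) (hnwd : IsNowhereDense F) :
    IsMeagre (fibNonmeager f F) := by
  obtain ⟨b, hbc, -, hb⟩ := exists_countable_basis W
  haveI : Countable b := hbc.to_subtype
  have hdense : Dense Fᶜ := (isClosed_isNowhereDense_iff_compl.mp ⟨hclosed, hnwd⟩).2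
  set s : b → Set V := fun B => f '' B.1 \ f '' (B.1 ∩ Fᶜ) with hs
  have hsnwd : ∀ B : b, IsNowhereDense (s B) := by
    intro B
    apply isNowhereDense_diff (ho _ (hb.isOpen B.2))
      (ho _ ((hb.isOpen B.2).inter hclosed.isOpen_compl))
    rintro v ⟨x, hxB, rfl⟩
    rw [mem_closure_iff]
    intro o hoo hvo
    obtain ⟨w, ⟨hwB, hwo⟩, hwF⟩ := hdense.inter_open_nonempty _
      ((hb.isOpen B.2).inter (hoo.preimage hc)) ⟨x, hxB, hvo⟩
    exact ⟨f w, hwo, ⟨w, ⟨hwB, hwF⟩, rfl⟩⟩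
  have hsub : fibNonmeager f F ⊆ ⋃ B : b, s B := by
    intro v hv
    by_contra h
    simp only [mem_iUnion, not_exists] at h
    apply hv
    have hden2 : Dense ((Subtype.val ⁻¹' F : Set (f ⁻¹' {v}))ᶜ) := by
      rw [← preimage_compl]
      apply (hb.isInducing IsInducing.subtypeVal).dense_iff.mpr
      rintro o ⟨B, hBb, rfl⟩ ⟨x, hxB⟩
      have hvB : v ∈ f '' B := ⟨x.1, hxB, x.2⟩
      have hvs := h ⟨B, hBb⟩
      simp only [hs, mem_diff, not_and, not_not] at hvs
      obtain ⟨w, ⟨hwB, hwF⟩, hfw⟩ := hvs hvB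
      exact ⟨⟨w, hfw⟩, hwB, hwF⟩
    have hcl : IsClosed (Subtype.val ⁻¹' F : Set (f ⁻¹' {v})) :=
      hclosed.preimage continuous_subtype_val
    have : IsNowhereDense (Subtype.val ⁻¹' F : Set (f ⁻¹' {v})) := by
      rw [hcl.isNowhereDense_iff, interior_eq_empty_iff_dense_compl]
      exact hden2
    exact this.isMeagre'
  exact (isMeagre_iUnion' fun B => (hsnwd B).isMeagre').mono hsub

lemma fibNonmeager_isMeagre [SecondCountableTopology W] (hc : Continuous f)
    (ho : IsOpenMap f) {M : Set W} (hM : IsMeagre M) : IsMeagre (fibNonmeager f M) := by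
  obtain ⟨S, hSnwd, hSc, hSsub⟩ := isMeagre_iff_countable_union_isNowhereDense.mp hM
  haveI := hSc.to_subtype
  have hsub : M ⊆ ⋃ t : S, closure t.1 := by
    intro x hx
    obtain ⟨t, htS, hxt⟩ := hSsub hx
    exact mem_iUnion.mpr ⟨⟨t, htS⟩, subset_closure hxt⟩
  have h1 : fibNonmeager f M ⊆ ⋃ t : S, fibNonmeager f (closure t.1) := by
    intro v hv
    by_contra h
    simp only [mem_iUnion, not_exists] at h
    apply hv
    have hsub2 : (Subtype.val ⁻¹' M : Set (f ⁻¹' {v})) ⊆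
        ⋃ t : S, (Subtype.val ⁻¹' (closure t.1) : Set (f ⁻¹' {v})) := by
      rw [← preimage_iUnion]
      exact preimage_mono hsub
    refine IsMeagre.mono hsub2 (isMeagre_iUnion' fun t => ?_)
    have ht := h t
    simpa only [fibNonmeager, mem_setOf_eq, not_not] using ht
  have h2 : ∀ t : S, IsMeagre (fibNonmeager f (closure t.1)) := fun t =>
    fibNonmeager_isMeagre_of_nwd hc ho isClosed_closure (hSnwd t.1 t.2).closure
  exact (isMeagre_iUnion' h2).mono h1

lemma KU [SecondCountableTopology W] (hc : Continuous f) (ho : IsOpenMap f)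
    (hB : ∀ v, BaireSpace (f ⁻¹' {v})) {A : Set W} (hA : BaireMeasurableSet A) :
    BaireMeasurableSet (fibNonmeager f A) ∧ (IsMeagre A ↔ IsMeagre (fibNonmeager f A)) := by
  obtain ⟨U, hUo, hAU⟩ := hA.residualEq_isOpen
  set D := (A \ U) ∪ (U \ A) with hD
  have hDm : IsMeagre D := by
    rw [IsMeagre]
    refine mem_of_superset hAU ?_
    intro x hx
    simp only [mem_setOf_eq] at hx
    simp only [hD, mem_compl_iff, mem_union, mem_diff, not_or, not_and, not_not]
    constructor
    · exact fun hxA => hx.mp hxA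
    · exact fun hxU => hx.symm.mp hxU
  have hED : IsMeagre (fibNonmeager f D) := fibNonmeager_isMeagre hc ho hDm
  have hAsub : A ⊆ U ∪ D := by
    intro x hx
    by_cases hU : x ∈ U
    · exact Or.inl hU
    · exact Or.inr (Or.inl ⟨hx, hU⟩)
  have hUsub : U ⊆ A ∪ D := by
    intro x hx
    by_cases hA' : x ∈ A
    · exact Or.inl hA'
    · exact Or.inr (Or.inr ⟨hx, hA'⟩)
  have hEU : fibNonmeager f U = f '' U := fibNonmeager_isOpen hB hUo
  have key1 : fibNonmeager f A ⊆ fibNonmeager f U ∪ fibNonmeager f D :=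
    (fibNonmeager_mono hAsub f).trans (fibNonmeager_union f U D)
  have key2 : fibNonmeager f U ⊆ fibNonmeager f A ∪ fibNonmeager f D :=
    (fibNonmeager_mono hUsub f).trans (fibNonmeager_union f A D)
  constructor
  · refine ((ho U hUo).baireMeasurableSet).congr ?_
    rw [eventuallyEq_set]
    refine mem_of_superset hED ?_
    intro v hv
    simp only [mem_compl_iff] at hv
    constructor
    · intro h
      rcases key2 (hEU ▸ h : v ∈ fibNonmeager f U) with h' | h'
      · exact h'
      · exact absurd h' hv
    · intro h
      rcases key1 h with h' | h'
      · exact hEU ▸ h'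
      · exact absurd h' hv
  · constructor
    · exact fun h => fibNonmeager_isMeagre hc ho h
    · intro h
      have hfU : IsMeagre (f '' U) := by
        rw [← hEU]
        exact (h.union' hED).mono key2
      have hpre : IsMeagre (f ⁻¹' (f '' U)) := hfU.preimage_of_isOpenMap hc ho
      exact (hpre.union' hDm).mono
        (hAsub.trans (union_subset_union_left D (subset_preimage_image f U)))

end Aux

section Apply
variable {X Y Z : Type*} [TopologicalSpace X] [TopologicalSpace Y] [TopologicalSpace Z]

/-- Restriction of `p` to the fiber of `q ∘ p` over `z`. -/
def fiberMap (p : X → Y) (q : Y → Z) (z : Z) : ((q ∘ p) ⁻¹' {z}) → (q ⁻¹' {z}) :=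
  fun x => ⟨p x.1, x.2⟩

lemma fiberMap_continuous {p : X → Y} (hpc : Continuous p) (q : Y → Z) (z : Z) :
    Continuous (fiberMap p q z) :=
  (hpc.comp continuous_subtype_val).subtype_mk _

lemma fiberMap_isOpenMap {p : X → Y} (hpo : IsOpenMap p) (q : Y → Z) (z : Z) :
    IsOpenMap (fiberMap p q z) :=
  hpo.restrictPreimage (q ⁻¹' {z})

/-- The fiber of `fiberMap p q z` over `y` is homeomorphic to the fiber of `p` over `y`. -/
def fiberHomeo (p : X → Y) (q : Y → Z) (z : Z) (y : q ⁻¹' {z}) :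
    (fiberMap p q z ⁻¹' {y}) ≃ₜ (p ⁻¹' {y.1}) where
  toFun x := ⟨x.1.1, congrArg Subtype.val x.2⟩
  invFun w := ⟨⟨w.1, (congrArg q w.2).trans y.2⟩, Subtype.ext w.2⟩
  left_inv x := rfl
  right_inv w := rfl
  continuous_toFun := (continuous_subtype_val.comp continuous_subtype_val).subtype_mk _
  continuous_invFun := (continuous_subtype_val.subtype_mk _).subtype_mk _

lemma fiber_meagre_iff (p : X → Y) (q : Y → Z) (z : Z) (y : q ⁻¹' {z}) (A : Set X) :
    IsMeagre (Subtype.val ⁻¹' (Subtype.val ⁻¹' A) : Set (fiberMap p q z ⁻¹' {y})) ↔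
      IsMeagre (Subtype.val ⁻¹' A : Set (p ⁻¹' {y.1})) := by
  have heq : (Subtype.val ⁻¹' (Subtype.val ⁻¹' A) : Set (fiberMap p q z ⁻¹' {y})) =
      (fiberHomeo p q z y) ⁻¹' (Subtype.val ⁻¹' A) := rfl
  rw [heq, Homeomorph.isMeagre_preimage]

lemma fibNonmeager_fiberMap (p : X → Y) (q : Y → Z) (z : Z) (A : Set X) :
    (Subtype.val ⁻¹' (fibNonmeager p A) : Set (q ⁻¹' {z})) =
      fibNonmeager (fiberMap p q z) (Subtype.val ⁻¹' A) := by
  ext y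
  simp only [fibNonmeager, mem_preimage, mem_setOf_eq]
  exact not_congr (fiber_meagre_iff p q z y A).symm

lemma fiberMap_baire {p : X → Y} (hBaire : ∀ y : Y, BaireSpace (p ⁻¹' {y}))
    (q : Y → Z) (z : Z) (y : q ⁻¹' {z}) : BaireSpace (fiberMap p q z ⁻¹' {y}) := by
  haveI := hBaire y.1
  exact (fiberHomeo p q z y).symm.baireSpace

end Apply

/-- fiberwise Kuratowski–Ulam. For continuous open maps
`p : X → Y`, `q : Y → Z` with `X` `(q∘p)`-fiberwise second-countable and
`p`-fiberwise Baire, and `A ⊆ X` with the Baire property in each `(q∘p)`-fiber: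
`∃*_p(A)` is Baire-measurable in each `q`-fiber, and
`∃*_{q∘p}(A) = ∃*_q(∃*_p(A))`. -/
theorem stmt_5 {X Y Z : Type*} [TopologicalSpace X] [TopologicalSpace Y] [TopologicalSpace Z]
    (p : X → Y) (q : Y → Z) (hpc : Continuous p) (hpo : IsOpenMap p)
    (hqc : Continuous q) (hqo : IsOpenMap q)
    (h2c : ∀ z : Z, SecondCountableTopology ((q ∘ p) ⁻¹' {z}))
    (hBaire : ∀ y : Y, BaireSpace (p ⁻¹' {y}))
    (A : Set X)
    (hA : ∀ z : Z, BaireMeasurableSet (Subtype.val ⁻¹' A : Set ((q ∘ p) ⁻¹' {z}))) :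
    (∀ z : Z, BaireMeasurableSet (Subtype.val ⁻¹' (fibNonmeager p A) : Set (q ⁻¹' {z}))) ∧
    fibNonmeager (q ∘ p) A = fibNonmeager q (fibNonmeager p A) := by
  have key : ∀ z : Z,
      BaireMeasurableSet (Subtype.val ⁻¹' (fibNonmeager p A) : Set (q ⁻¹' {z})) ∧
      (IsMeagre (Subtype.val ⁻¹' A : Set ((q ∘ p) ⁻¹' {z})) ↔
        IsMeagre (Subtype.val ⁻¹' (fibNonmeager p A) : Set (q ⁻¹' {z}))) := by
    intro z
    haveI := h2c z
    have hKU := KU (fiberMap_continuous hpc q z) (fiberMap_isOpenMap hpo q z)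
      (fiberMap_baire hBaire q z) (hA z)
    rw [fibNonmeager_fiberMap p q z A]
    exact hKU
  refine ⟨fun z => (key z).1, ?_⟩
  ext z
  simp only [fibNonmeager, mem_setOf_eq]
  exact not_congr (key z).2
end

section
/- Let f : X → Y be a continuous open surjection between quasi-Polish spaces. Then for every countable ordinal ξ ≥ 1, a set B ⊆ Y is Σ⁰_ξ if and only if f⁻¹(B) ⊆ X is Σ⁰_ξ. -/
/-!
Continuity gives one direction. For the other, let `∃*_f A` be the set of `y` such that `A` is
non-meagre in the fibre `f⁻¹(y)`. The fibres are `Π⁰₂` in `X`, hence quasi-Polish, hence Baire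
(a quasi-Polish space is Baire by a Cantor-type construction of a point in `ℕ → Prop` along
shrinking cylinders), so `∃*_f (f⁻¹ B) = B` by surjectivity. Finally `∃*_f` preserves `Σ⁰_ξ`,
by induction along with an open localizing set `W`: for `A` open, `∃*_f (A ∩ W) = f (A ∩ W)` is
open since `f` is; and for `A = ⋃ₙ Uₙ \ Vₙ`, since Borel sets have the Baire property,
`∃*_f (A ∩ W) = ⋃_{n,k} ∃*_f (Uₙ ∩ Wₖ ∩ W) \ ∃*_f (Vₙ ∩ Wₖ ∩ W)` for a countable basis `(Wₖ)`
of `X`.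
-/

open Set

/-- A `Π⁰₂` set: a countable intersection of sets `(U ⇒ V) = Uᶜ ∪ V` with `U, V` open. -/
def IsPi02 {X : Type*} [TopologicalSpace X] (A : Set X) : Prop :=
  ∃ U V : ℕ → Set X, (∀ n, IsOpen (U n)) ∧ (∀ n, IsOpen (V n)) ∧
    A = ⋂ n, ((U n)ᶜ ∪ V n)

/-- A quasi-Polish space: homeomorphic (via an embedding) to a `Π⁰₂` subspace of
the countable power `ℕ → Prop` of the Sierpiński space. -/
def QuasiPolish (X : Type*) [TopologicalSpace X] : Prop :=
  ∃ f : X → (ℕ → Prop), Topology.IsEmbedding f ∧ IsPi02 (Set.range f)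

/-- Selivanov's Borel hierarchy: `Σ⁰₁` = open sets, and for `ξ ≥ 2`,
`Σ⁰_ξ` consists of countable unions `⋃ n, U n \ V n` with `U n, V n ∈ Σ⁰_{ζ n}`,
`ζ n < ξ`. -/
inductive SelSigma {X : Type*} [TopologicalSpace X] : Ordinal.{0} → Set X → Prop
  | base {U : Set X} (hU : IsOpen U) : SelSigma 1 U
  | step {ξ : Ordinal.{0}} (hξ : 2 ≤ ξ) (ζ : ℕ → Ordinal.{0}) (hζ : ∀ n, ζ n < ξ)
      (U V : ℕ → Set X) (hU : ∀ n, SelSigma (ζ n) (U n)) (hV : ∀ n, SelSigma (ζ n) (V n)) :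
      SelSigma ξ (⋃ n, U n \ V n)

open Topology TopologicalSpace

def cyl (F : Finset ℕ) : Set (ℕ → Prop) := {x | ∀ i ∈ F, x i}

lemma isOpen_cyl (F : Finset ℕ) : IsOpen (cyl F) := by
  have hcoord : ∀ i, IsOpen {x : ℕ → Prop | x i} := fun i =>
    continuous_Prop.mp (continuous_apply i)
  simpa only [cyl, ofPred_forall] using isOpen_biInter_finset fun i _ => hcoord i

lemma cyl_union (F E : Finset ℕ) : cyl (F ∪ E) = cyl F ∩ cyl E := by
  ext x
  simp only [cyl, Finset.mem_union, mem_ofPred_eq, mem_inter_iff]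
  exact ⟨fun h => ⟨fun i hi => h i (.inl hi), fun i hi => h i (.inr hi)⟩,
    fun h i hi => hi.elim (h.1 i) (h.2 i)⟩

lemma cyl_antitone : Antitone cyl := fun _ _ h _ hx i hi => hx i (h hi)

/-- Open sets of the Sierpiński space are upward closed, so only the true coordinates of a
basic neighbourhood constrain it. -/
lemma exists_cyl_subset {G : Set (ℕ → Prop)} (hG : IsOpen G) {x : ℕ → Prop} (hx : x ∈ G) :
    ∃ F : Finset ℕ, x ∈ cyl F ∧ cyl F ⊆ G := by
  classical
  obtain ⟨I, u, hu, hIG⟩ := isOpen_pi_iff.mp hG x hx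
  refine ⟨I.filter x, fun i hi => (Finset.mem_filter.mp hi).2, fun z hz => hIG fun i hi => ?_⟩
  refine IsUpper.isUpperSet_of_isOpen (hu i hi).1 (fun hxi => ?_) (hu i hi).2
  exact hz i (Finset.mem_filter.mpr ⟨hi, hxi⟩)

lemma eventually_cyl_subset_of_monotone {F : ℕ → Finset ℕ} (hF : Monotone F)
    {G : Set (ℕ → Prop)} (hG : IsOpen G) (hz : (fun i => ∃ k, i ∈ F k) ∈ G) :
    ∃ k₀, ∀ k ≥ k₀, cyl (F k) ⊆ G := by
  obtain ⟨E, hzE, hEG⟩ := exists_cyl_subset hG hz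
  obtain ⟨k₀, hk₀⟩ := Directed.exists_mem_subset_of_finset_subset_biUnion
    (f := fun k => (F k : Set ℕ)) (fun k l => ⟨max k l, hF (le_max_left k l),
      hF (le_max_right k l)⟩) (s := E) fun i hi => mem_iUnion.mpr (hzE i hi)
  exact ⟨k₀, fun k hk => (cyl_antitone fun i hi => hF hk (hk₀ hi)).trans hEG⟩

lemma exists_cyl_refinement {A U V G : Set (ℕ → Prop)} (hAUV : ∀ x ∈ A, x ∈ U → x ∈ V)
    (hV : IsOpen V) (hG : IsOpen G) {F : Finset ℕ} (hF : (A ∩ cyl F ∩ G).Nonempty) :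
    ∃ F', F ⊆ F' ∧ (A ∩ cyl F').Nonempty ∧ cyl F' ⊆ G ∧ (cyl F' ⊆ U → cyl F' ⊆ V) := by
  obtain ⟨x, ⟨hxA, hxF⟩, hxG⟩ := hF
  obtain ⟨H, hH, hxH, hHG, hHV⟩ : ∃ H, IsOpen H ∧ x ∈ H ∧ H ⊆ G ∧ (x ∈ U → H ⊆ V) := by
    by_cases hxU : x ∈ U
    · exact ⟨G ∩ V, hG.inter hV, ⟨hxG, hAUV x hxA hxU⟩, inter_subset_left,
        fun _ => inter_subset_right⟩
    · exact ⟨G, hG, hxG, subset_rfl, fun h => absurd h hxU⟩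
  obtain ⟨E, hxE, hEH⟩ := exists_cyl_subset hH hxH
  have hxFE : x ∈ cyl (F ∪ E) := by rw [cyl_union]; exact ⟨hxF, hxE⟩
  have hFEH : cyl (F ∪ E) ⊆ H := by rw [cyl_union]; exact inter_subset_right.trans hEH
  exact ⟨F ∪ E, Finset.subset_union_left, ⟨x, hxA, hxFE⟩, hFEH.trans hHG,
    fun hU => hFEH.trans (hHV (hU hxFE))⟩

/-- `z` is the union of the coordinate sets of a refining sequence of cylinders; every step
`Nat.pair n m` makes sure that the clause `U n ⇒ V n` holds in the limit. -/
lemma exists_mem_inter_cyl_forall_mem {A : Set (ℕ → Prop)} {U V G : ℕ → Set (ℕ → Prop)}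
    (hA : A = ⋂ n, (U n)ᶜ ∪ V n) (hU : ∀ n, IsOpen (U n)) (hV : ∀ n, IsOpen (V n))
    (hG : ∀ k, IsOpen (G k))
    (hGd : ∀ k F, (A ∩ cyl F).Nonempty → (A ∩ cyl F ∩ G k).Nonempty)
    {F₀ : Finset ℕ} (h₀ : (A ∩ cyl F₀).Nonempty) :
    ∃ z ∈ A ∩ cyl F₀, ∀ k, z ∈ G k := by
  have hAUV : ∀ n, ∀ x ∈ A, x ∈ U n → x ∈ V n := fun n x hx hxU => by
    rw [hA] at hx
    exact (mem_iInter.mp hx n).resolve_left (not_not_intro hxU)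
  let S := {F : Finset ℕ // (A ∩ cyl F).Nonempty}
  have hstep : ∀ k (F : S), ∃ F' : S, F.1 ⊆ F'.1 ∧ cyl F'.1 ⊆ G k ∧
      (cyl F'.1 ⊆ U k.unpair.1 → cyl F'.1 ⊆ V k.unpair.1) := fun k F => by
    obtain ⟨F', hFF', hF', hF'G, hF'V⟩ :=
      exists_cyl_refinement (hAUV _) (hV _) (hG k) (hGd k F.1 F.2)
    exact ⟨⟨F', hF'⟩, hFF', hF'G, hF'V⟩
  choose next hnext_sub hnext_G hnext_V using hstep
  let F : ℕ → Finset ℕ := fun k => (Nat.rec ⟨F₀, h₀⟩ next k : S).1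
  have hF : Monotone F := monotone_nat_of_le_succ fun k => hnext_sub k _
  set z : ℕ → Prop := fun i => ∃ k, i ∈ F k
  have hz : ∀ k, z ∈ cyl (F k) := fun k i hi => ⟨k, hi⟩
  refine ⟨z, ⟨?_, hz 0⟩, fun k => hnext_G k _ (hz (k + 1))⟩
  rw [hA, mem_iInter]
  intro n
  by_cases hzU : z ∈ U n
  · obtain ⟨m, hm⟩ := eventually_cyl_subset_of_monotone hF (hU n) hzU
    have hclause := hnext_V (Nat.pair n m)
    rw [Nat.unpair_pair] at hclause
    exact .inr (hclause _ (hm _ ((Nat.right_le_pair n m).trans (Nat.le_succ _)))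
      (hz (Nat.pair n m + 1)))
  · exact .inl hzU

section Pi02

variable {X Y : Type*} [TopologicalSpace X] [TopologicalSpace Y]

lemma IsOpen.isPi02 {U : Set X} (hU : IsOpen U) : IsPi02 U :=
  ⟨fun _ => univ, fun _ => U, fun _ => isOpen_univ, fun _ => hU,
    by simp only [compl_univ, empty_union, iInter_const]⟩

lemma IsClosed.isPi02 {C : Set X} (hC : IsClosed C) : IsPi02 C :=
  ⟨fun _ => Cᶜ, fun _ => ∅, fun _ => hC.isOpen_compl, fun _ => isOpen_empty,
    by simp only [compl_compl, union_empty, iInter_const]⟩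

lemma IsPi02.iInter {ι : Type*} [Countable ι] {A : ι → Set X} (h : ∀ i, IsPi02 (A i)) :
    IsPi02 (⋂ i, A i) := by
  rcases isEmpty_or_nonempty ι with hι | hι
  · simpa only [iInter_of_empty] using isOpen_univ.isPi02
  choose U V hU hV hA using h
  obtain ⟨g, hg⟩ := exists_surjective_nat (ι × ℕ)
  refine ⟨fun k => U (g k).1 (g k).2, fun k => V (g k).1 (g k).2, fun k => hU _ _,
    fun k => hV _ _, ?_⟩
  rw [hg.iInter_comp fun p => (U p.1 p.2)ᶜ ∪ V p.1 p.2]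
  ext x
  simp only [hA, mem_iInter, Prod.forall]

lemma IsPi02.inter {A B : Set X} (hA : IsPi02 A) (hB : IsPi02 B) : IsPi02 (A ∩ B) := by
  rw [inter_eq_iInter]
  exact IsPi02.iInter (Bool.forall_bool.mpr ⟨hB, hA⟩)

lemma IsPi02.preimage {f : X → Y} (hf : Continuous f) {B : Set Y} (hB : IsPi02 B) :
    IsPi02 (f ⁻¹' B) := by
  obtain ⟨U, V, hU, hV, rfl⟩ := hB
  exact ⟨fun n => f ⁻¹' U n, fun n => f ⁻¹' V n, fun n => (hU n).preimage hf,
    fun n => (hV n).preimage hf, by simp only [preimage_iInter, preimage_union, preimage_compl]⟩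

lemma IsPi02.exists_isPi02_preimage_eq {e : X → Y} (he : IsInducing e) {A : Set X}
    (hA : IsPi02 A) : ∃ T : Set Y, IsPi02 T ∧ e ⁻¹' T = A := by
  obtain ⟨U, V, hU, hV, rfl⟩ := hA
  choose U' hU' hUU' using fun n => he.isOpen_iff.mp (hU n)
  choose V' hV' hVV' using fun n => he.isOpen_iff.mp (hV n)
  refine ⟨⋂ n, (U' n)ᶜ ∪ V' n, ⟨U', V', hU', hV', rfl⟩, ?_⟩
  simp only [preimage_iInter, preimage_union, preimage_compl, hUU', hVV']

/-- In a second-countable T₀ space a point is determined by the basic open sets containing it,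
each of which is open or closed. -/
lemma isPi02_singleton [SecondCountableTopology X] [T0Space X] (x : X) : IsPi02 {x} := by
  have hB := isBasis_countableBasis X
  have hsingleton : {x} = ⋂ b : countableBasis X, {y | y ∈ (b : Set X) ↔ x ∈ (b : Set X)} := by
    ext y
    simp only [mem_singleton_iff, mem_iInter, mem_ofPred_eq]
    refine ⟨fun hyx _ => hyx ▸ Iff.rfl, fun h => Inseparable.eq ?_⟩
    exact hB.nhds_hasBasis.ext hB.nhds_hasBasis
      (fun b ⟨hb, hxb⟩ => ⟨b, ⟨hb, (h ⟨b, hb⟩).mp hxb⟩, subset_rfl⟩)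
      (fun b ⟨hb, hyb⟩ => ⟨b, ⟨hb, (h ⟨b, hb⟩).mpr hyb⟩, subset_rfl⟩)
  have := (countable_countableBasis X).to_subtype
  rw [hsingleton]
  refine IsPi02.iInter fun b => ?_
  have hb : IsOpen (b : Set X) := hB.isOpen b.2
  by_cases hxb : x ∈ (b : Set X)
  · convert hb.isPi02 using 1
    simp only [hxb, iff_true, ofPred_mem_eq]
  · convert hb.isClosed_compl.isPi02 using 1
    simp only [hxb, iff_false]
    rfl

theorem IsPi02.baireSpace {A : Set (ℕ → Prop)} (hA : IsPi02 A) : BaireSpace A := by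
  obtain ⟨U, V, hU, hV, hAUV⟩ := hA
  refine ⟨fun g hgo hgd => dense_iff_inter_open.mpr fun O hO ⟨x₀, hx₀⟩ => ?_⟩
  choose G hG hGg using fun k => isOpen_induced_iff.mp (hgo k)
  obtain ⟨G₀, hG₀, rfl⟩ := isOpen_induced_iff.mp hO
  have hGd : ∀ k F, (A ∩ cyl F).Nonempty → (A ∩ cyl F ∩ G k).Nonempty := by
    rintro k F ⟨x, hxA, hxF⟩
    obtain ⟨⟨y, hyA⟩, hyF, hyG⟩ := (hgd k).inter_open_nonempty _
      ((isOpen_cyl F).preimage continuous_subtype_val) ⟨⟨x, hxA⟩, hxF⟩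
    exact ⟨y, ⟨hyA, hyF⟩, by rwa [← hGg k] at hyG⟩
  obtain ⟨F₀, hx₀F₀, hF₀G₀⟩ := exists_cyl_subset hG₀ hx₀
  obtain ⟨z, ⟨hzA, hzF₀⟩, hzG⟩ :=
    exists_mem_inter_cyl_forall_mem hAUV hU hV hG hGd ⟨x₀, x₀.2, hx₀F₀⟩
  exact ⟨⟨z, hzA⟩, hF₀G₀ hzF₀, mem_iInter.mpr fun k => by rw [← hGg k]; exact hzG k⟩

end Pi02

namespace QuasiPolish

variable {X : Type*} [TopologicalSpace X]

theorem secondCountableTopology (hX : QuasiPolish X) : SecondCountableTopology X :=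
  let ⟨_, he, _⟩ := hX; he.secondCountableTopology

theorem t0Space (hX : QuasiPolish X) : T0Space X :=
  let ⟨_, he, _⟩ := hX; he.t0Space

theorem baireSpace (hX : QuasiPolish X) : BaireSpace X := by
  obtain ⟨e, he, hrange⟩ := hX
  have := hrange.baireSpace
  exact he.toHomeomorph.symm.baireSpace

theorem subtype_of_isPi02 (hX : QuasiPolish X) {A : Set X} (hA : IsPi02 A) : QuasiPolish A := by
  obtain ⟨e, he, hrange⟩ := hX
  obtain ⟨T, hT, rfl⟩ := hA.exists_isPi02_preimage_eq he.isInducing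
  refine ⟨e ∘ Subtype.val, he.comp .subtypeVal, ?_⟩
  rw [range_comp, Subtype.range_coe, image_preimage_eq_range_inter]
  exact hrange.inter hT

end QuasiPolish

namespace SelSigma

variable {X Y : Type*} [TopologicalSpace X] [TopologicalSpace Y]

theorem preimage {f : X → Y} (hf : Continuous f) {ξ : Ordinal.{0}} {B : Set Y}
    (hB : SelSigma ξ B) : SelSigma ξ (f ⁻¹' B) := by
  induction hB with
  | base hU => exact .base (hU.preimage hf)
  | step hξ ζ hζ U V _ _ ihU ihV =>
    simpa only [preimage_iUnion, preimage_sdiff] using SelSigma.step hξ ζ hζ _ _ ihU ihV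

theorem baireMeasurableSet {ξ : Ordinal.{0}} {A : Set X} (hA : SelSigma ξ A) :
    BaireMeasurableSet A := by
  induction hA with
  | base hU => exact hU.baireMeasurableSet
  | step _ _ _ _ _ _ _ ihU ihV => exact .iUnion fun n => (ihU n).diff (ihV n)

theorem iUnion_diff {ι : Type*} [Countable ι] [Nonempty ι] {ξ : Ordinal.{0}} (hξ : 2 ≤ ξ)
    (ζ : ι → Ordinal.{0}) (hζ : ∀ i, ζ i < ξ) (U V : ι → Set X)
    (hU : ∀ i, SelSigma (ζ i) (U i)) (hV : ∀ i, SelSigma (ζ i) (V i)) :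
    SelSigma ξ (⋃ i, U i \ V i) := by
  obtain ⟨g, hg⟩ := exists_surjective_nat ι
  rw [← hg.iUnion_comp fun i => U i \ V i]
  exact .step hξ (ζ ∘ g) (fun n => hζ _) _ _ (fun n => hU _) (fun n => hV _)

end SelSigma

section Category

variable {Z : Type*} [TopologicalSpace Z]

lemma isMeagre_iUnion_iff {ι : Type*} [Countable ι] {s : ι → Set Z} :
    IsMeagre (⋃ i, s i) ↔ ∀ i, IsMeagre (s i) :=
  ⟨fun h i => h.mono (subset_iUnion s i), isMeagre_iUnion⟩

lemma isMeagre_sdiff_of_residualEq {s u : Set Z} (h : s =ᵇ u) : IsMeagre (u \ s) :=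
  Filter.mem_of_superset (Filter.eventuallyEq_set.mp h) fun _ hx hxus => hxus.2 (hx.mpr hxus.1)

/-- A Baire measurable set `(S \ T) ∩ W` is comeagre in some basic open set `b i`; localizing
there separates `S`, which stays non-meagre, from `T`, which becomes meagre. -/
theorem not_isMeagre_diff_inter_iff [BaireSpace Z] {ι : Type*} {b : ι → Set Z}
    (hb : IsTopologicalBasis (range b)) {S T W : Set Z} (h : BaireMeasurableSet ((S \ T) ∩ W)) :
    ¬IsMeagre ((S \ T) ∩ W) ↔ ∃ i, ¬IsMeagre (S ∩ (b i ∩ W)) ∧ IsMeagre (T ∩ (b i ∩ W)) := by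
  constructor
  · intro hST
    obtain ⟨u, hu, hSTu⟩ := h.residualEq_isOpen
    obtain rfl | hune := u.eq_empty_or_nonempty
    · exact absurd (by simpa only [sdiff_empty] using isMeagre_sdiff_of_residualEq hSTu.symm) hST
    obtain ⟨_, ⟨i, rfl⟩, hbne, hbu⟩ := hb.exists_nonempty_subset hune hu
    have hmeagre : IsMeagre (b i \ ((S \ T) ∩ W)) :=
      (isMeagre_sdiff_of_residualEq hSTu).mono (sdiff_subset_sdiff_left hbu)
    refine ⟨i, fun hS => not_isMeagre_of_isOpen (hb.isOpen ⟨i, rfl⟩) hbne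
      ((hmeagre.union hS).mono fun x hx => ?_), hmeagre.mono fun x hx => ?_⟩
    · by_cases hx' : x ∈ (S \ T) ∩ W
      · exact .inr ⟨hx'.1.1, hx, hx'.2⟩
      · exact .inl ⟨hx, hx'⟩
    · exact ⟨hx.2.1, fun hx' => hx'.1.2 hx.1⟩
  · rintro ⟨i, hS, hT⟩ hST
    refine hS ((hST.union hT).mono fun x ⟨hxS, hxb, hxW⟩ => ?_)
    by_cases hxT : x ∈ T
    · exact .inr ⟨hxT, hxb, hxW⟩
    · exact .inl ⟨⟨hxS, hxT⟩, hxW⟩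

end Category

section Fibers

variable {X Y : Type*} [TopologicalSpace X]

/-- The Baire category quantifier `∃*_f A`: the points over which `A` is non-meagre in the
fibre. -/
def nonmeagreFibers (f : X → Y) (A : Set X) : Set Y :=
  {y | ¬IsMeagre ((↑) ⁻¹' A : Set (f ⁻¹' {y}))}

variable {f : X → Y} [∀ y, BaireSpace (f ⁻¹' {y})]

lemma nonmeagreFibers_of_isOpen {O : Set X} (hO : IsOpen O) : nonmeagreFibers f O = f '' O := by
  ext y
  refine ⟨fun h => ?_, fun ⟨x, hxO, hxy⟩ =>
    not_isMeagre_of_isOpen (hO.preimage continuous_subtype_val) ⟨⟨x, hxy⟩, hxO⟩⟩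
  obtain ⟨⟨x, hxy⟩, hxO⟩ := nonempty_of_not_isMeagre h
  exact ⟨x, hxO, hxy⟩

lemma nonmeagreFibers_preimage (hf : Function.Surjective f) (B : Set Y) :
    nonmeagreFibers f (f ⁻¹' B) = B := by
  ext y
  have hfiber : ∀ x : f ⁻¹' {y}, f x = y := fun x => x.2
  by_cases hy : y ∈ B
  · have huniv : ((↑) ⁻¹' (f ⁻¹' B) : Set (f ⁻¹' {y})) = univ :=
      eq_univ_of_forall fun x => show f x ∈ B from (hfiber x).symm ▸ hy
    obtain ⟨x, rfl⟩ := hf y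
    simpa only [nonmeagreFibers, mem_ofPred_eq, huniv, hy, iff_true] using
      not_isMeagre_of_isOpen isOpen_univ ⟨⟨x, rfl⟩, trivial⟩
  · have hempty : ((↑) ⁻¹' (f ⁻¹' B) : Set (f ⁻¹' {y})) = ∅ :=
      eq_empty_of_forall_notMem fun x hx => hy (hfiber x ▸ hx)
    simpa only [nonmeagreFibers, mem_ofPred_eq, hempty, hy, iff_false, not_not] using
      IsMeagre.empty

lemma nonmeagreFibers_iUnion_diff_inter {b : ℕ → Set X} (hb : IsTopologicalBasis (range b))
    {ζ : ℕ → Ordinal.{0}} {U V : ℕ → Set X} (hU : ∀ n, SelSigma (ζ n) (U n))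
    (hV : ∀ n, SelSigma (ζ n) (V n)) {W : Set X} (hW : IsOpen W) :
    nonmeagreFibers f ((⋃ n, U n \ V n) ∩ W) =
      ⋃ p : ℕ × ℕ, nonmeagreFibers f (U p.1 ∩ (b p.2 ∩ W)) \
        nonmeagreFibers f (V p.1 ∩ (b p.2 ∩ W)) := by
  ext y
  have hby : IsTopologicalBasis (range (preimage ((↑) : f ⁻¹' {y} → X) ∘ b)) := by
    simpa only [range_comp] using hb.isInducing IsInducing.subtypeVal
  have hmeas : ∀ n, BaireMeasurableSet ((↑) ⁻¹' ((U n \ V n) ∩ W) : Set (f ⁻¹' {y})) :=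
    fun n => ((((hU n).preimage continuous_subtype_val).baireMeasurableSet.diff
      ((hV n).preimage continuous_subtype_val).baireMeasurableSet).inter
      (hW.preimage continuous_subtype_val).baireMeasurableSet)
  simp only [nonmeagreFibers, mem_ofPred_eq, mem_iUnion, mem_sdiff, Prod.exists, iUnion_inter,
    preimage_iUnion, isMeagre_iUnion_iff, not_forall, not_not]
  exact exists_congr fun n => not_isMeagre_diff_inter_iff hby (hmeas n)

theorem SelSigma.nonmeagreFibers_inter [TopologicalSpace Y] (ho : IsOpenMap f) {b : ℕ → Set X}
    (hb : IsTopologicalBasis (range b)) {ξ : Ordinal.{0}} {A W : Set X} (hA : SelSigma ξ A)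
    (hW : IsOpen W) : SelSigma ξ (nonmeagreFibers f (A ∩ W)) := by
  induction hA generalizing W with
  | base hU =>
    rw [nonmeagreFibers_of_isOpen (hU.inter hW)]
    exact .base (ho _ (hU.inter hW))
  | step hξ ζ hζ U V hU hV ihU ihV =>
    have hbW : ∀ k, IsOpen (b k ∩ W) := fun k => (hb.isOpen ⟨k, rfl⟩).inter hW
    rw [nonmeagreFibers_iUnion_diff_inter hb hU hV hW]
    exact .iUnion_diff hξ (fun p => ζ p.1) (fun p => hζ p.1) _ _
      (fun p => ihU p.1 (hbW p.2)) (fun p => ihV p.1 (hbW p.2))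

end Fibers

theorem stmt_7_general {X Y : Type*} [TopologicalSpace X] [TopologicalSpace Y]
    (hX : QuasiPolish X) (hY : QuasiPolish Y)
    (f : X → Y) (hc : Continuous f) (ho : IsOpenMap f) (hs : Function.Surjective f)
    (ξ : Ordinal.{0})
    (B : Set Y) :
    SelSigma ξ B ↔ SelSigma ξ (f ⁻¹' B) := by
  refine ⟨SelSigma.preimage hc, fun h => ?_⟩
  have := hX.secondCountableTopology
  have := hY.secondCountableTopology
  have := hY.t0Space
  have : ∀ y, BaireSpace (f ⁻¹' {y}) := fun y =>
    (hX.subtype_of_isPi02 ((isPi02_singleton y).preimage hc)).baireSpace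
  obtain ⟨b, hb⟩ := exists_seq_basis X
  simpa only [inter_univ, nonmeagreFibers_preimage hs] using
    h.nonmeagreFibers_inter ho hb isOpen_univ

/-- For a continuous open surjection `f : X → Y` between
quasi-Polish spaces and any countable ordinal `ξ ≥ 1`, a set `B ⊆ Y` is `Σ⁰_ξ`
iff `f⁻¹(B)` is `Σ⁰_ξ`. -/
theorem stmt_7 {X Y : Type*} [TopologicalSpace X] [TopologicalSpace Y]
    (hX : QuasiPolish X) (hY : QuasiPolish Y)
    (f : X → Y) (hc : Continuous f) (ho : IsOpenMap f) (hs : Function.Surjective f)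
    (ξ : Ordinal.{0}) (hξ1 : 1 ≤ ξ) (hξc : ξ.card ≤ Cardinal.aleph0)
    (B : Set Y) :
    SelSigma ξ B ↔ SelSigma ξ (f ⁻¹' B) :=
  stmt_7_general hX hY f hc ho hs ξ B
end

section
/- Let (X, G) be a paracompact Hausdorff topological groupoid with identity embedding ι : X → G. For every open W ⊆ G containing ι(X), there exists a symmetric open W' ⊆ G containing ι(X) such that W' · W' ⊆ W (i.e., for all composable g, h ∈ W', the product gh lies in W). -/
open Set

/-- A topological groupoid with space of objects `X` and space of morphisms `G`:
continuous source `src`, target `tgt`, identity `ident`, inverse `inv`, and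
multiplication `comp` (continuous on the set of composable pairs). -/
structure TopologicalGroupoid (X G : Type*) [TopologicalSpace X] [TopologicalSpace G] where
  src : G → X
  tgt : G → X
  ident : X → G
  inv : G → G
  comp : G → G → G
  continuous_src : Continuous src
  continuous_tgt : Continuous tgt
  continuous_ident : Continuous ident
  continuous_inv : Continuous inv
  continuous_comp :
    Continuous fun pr : {pr : G × G // src pr.1 = tgt pr.2} => comp pr.1.1 pr.1.2
  src_ident : ∀ x, src (ident x) = x
  tgt_ident : ∀ x, tgt (ident x) = x
  src_inv : ∀ g, src (inv g) = tgt g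
  tgt_inv : ∀ g, tgt (inv g) = src g
  src_comp : ∀ g h, src g = tgt h → src (comp g h) = src h
  tgt_comp : ∀ g h, src g = tgt h → tgt (comp g h) = tgt g
  comp_assoc : ∀ g h k, src g = tgt h → src h = tgt k →
    comp (comp g h) k = comp g (comp h k)
  ident_comp : ∀ g, comp (ident (tgt g)) g = g
  comp_ident : ∀ g, comp g (ident (src g)) = g
  inv_comp : ∀ g, comp (inv g) g = ident (src g)
  comp_inv : ∀ g, comp g (inv g) = ident (tgt g)


/-- Every open cover of a paracompact Hausdorff space admits a barycentric
(point-star) open refinement indexed by points. -/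
theorem exists_barycentric_refinement {Y : Type*} [TopologicalSpace Y] [T2Space Y]
    [ParacompactSpace Y] {ι : Type*} (u : ι → Set Y) (uo : ∀ i, IsOpen (u i))
    (uc : ⋃ i, u i = univ) :
    ∃ w : Y → Set Y, (∀ y, IsOpen (w y)) ∧ (∀ y, y ∈ w y) ∧
      ∀ z : Y, ∃ i, ∀ y, z ∈ w y → w y ⊆ u i := by
  obtain ⟨v, vo, vU, vlf, vu⟩ := precise_refinement u uo uc
  obtain ⟨e, eU, eo, ecl⟩ := exists_subset_iUnion_closure_subset (isClosed_univ (X := Y)) vo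
    (fun x _ => vlf.point_finite x) vU.ge
  have elf : LocallyFinite e := vlf.subset fun i => subset_closure.trans (ecl i)
  have eclf : LocallyFinite fun i => closure (e i) := elf.closure
  set I : Y → Set ι := fun y => {i | y ∈ closure (e i)} with hI
  have Ifin : ∀ y, (I y).Finite := fun y => eclf.point_finite y
  set w : Y → Set Y := fun y => (⋂ i ∈ I y, v i) \ (⋃ i ∈ (I y)ᶜ, closure (e i)) with hw
  have hclosed : ∀ y, IsClosed (⋃ i ∈ (I y)ᶜ, closure (e i)) := by
    intro y
    rw [Set.biUnion_eq_iUnion]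
    exact (eclf.comp_injective Subtype.val_injective).isClosed_iUnion fun i => isClosed_closure
  refine ⟨w, ?_, ?_, ?_⟩
  · intro y
    exact ((Ifin y).isOpen_biInter fun i _ => vo i).sdiff (hclosed y)
  · intro y
    refine ⟨mem_iInter₂.2 fun i hi => ecl i hi, ?_⟩
    intro hmem
    obtain ⟨i, hi, hyi⟩ := mem_iUnion₂.1 hmem
    exact hi hyi
  · intro z
    obtain ⟨i₀, hi₀⟩ := mem_iUnion.1 (eU (mem_univ z))
    refine ⟨i₀, fun y hy => ?_⟩
    have hIy : i₀ ∈ I y := by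
      by_contra h
      exact hy.2 (mem_biUnion h (subset_closure hi₀))
    exact fun a ha => vu i₀ (mem_iInter₂.1 ha.1 i₀ hIy)

theorem TopologicalGroupoid.inv_ident {X G : Type*} [TopologicalSpace X] [TopologicalSpace G]
    (Gr : TopologicalGroupoid X G) (x : X) : Gr.inv (Gr.ident x) = Gr.ident x := by
  have h1 := Gr.ident_comp (Gr.inv (Gr.ident x))
  rw [Gr.tgt_inv, Gr.src_ident] at h1
  rw [← h1, Gr.comp_inv, Gr.tgt_ident]

theorem TopologicalGroupoid.inv_inv {X G : Type*} [TopologicalSpace X] [TopologicalSpace G]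
    (Gr : TopologicalGroupoid X G) (g : G) : Gr.inv (Gr.inv g) = g := by
  have h1 := Gr.comp_ident (Gr.inv (Gr.inv g))
  rw [Gr.src_inv, Gr.tgt_inv, ← Gr.inv_comp g,
    ← Gr.comp_assoc _ _ _ (Gr.src_inv (Gr.inv g)) (Gr.src_inv g),
    Gr.inv_comp (Gr.inv g), Gr.src_inv, Gr.ident_comp] at h1
  exact h1.symm

/-- Ramsay's lemma on identity neighborhoods. In a paracompact
Hausdorff topological groupoid `(X, G)`, for every open `W ⊆ G` containing all
identities, there is a symmetric open `W' ⊆ G` containing all identities with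
`W' · W' ⊆ W`. -/
theorem stmt_10 {X G : Type*} [TopologicalSpace X] [TopologicalSpace G]
    [T2Space X] [ParacompactSpace X] [T2Space G] [ParacompactSpace G]
    (Gr : TopologicalGroupoid X G)
    (W : Set G) (hW : IsOpen W) (hidW : Set.range Gr.ident ⊆ W) :
    ∃ W' : Set G, IsOpen W' ∧ Set.range Gr.ident ⊆ W' ∧ Gr.inv ⁻¹' W' = W' ∧
      ∀ g h, g ∈ W' → h ∈ W' → Gr.src g = Gr.tgt h → Gr.comp g h ∈ W := by
  classical
  -- identities form a closed set
  have hRclosed : IsClosed (Set.range Gr.ident) := by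
    have : Set.range Gr.ident = {g | Gr.ident (Gr.src g) = g} := by
      ext g
      constructor
      · rintro ⟨x, rfl⟩; simp [Gr.src_ident]
      · intro h; exact ⟨Gr.src g, h⟩
    rw [this]
    exact isClosed_eq (Gr.continuous_ident.comp Gr.continuous_src) continuous_id
  -- for each x, a neighborhood of the identity whose products land in W
  have key : ∀ x : X, ∃ U : Set G, IsOpen U ∧ Gr.ident x ∈ U ∧
      ∀ g h, g ∈ U → h ∈ U → Gr.src g = Gr.tgt h → Gr.comp g h ∈ W := by
    intro x
    have hp : Gr.src (Gr.ident x) = Gr.tgt (Gr.ident x) := by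
      rw [Gr.src_ident, Gr.tgt_ident]
    have hopen : IsOpen ((fun pr : {pr : G × G // Gr.src pr.1 = Gr.tgt pr.2} =>
        Gr.comp pr.1.1 pr.1.2) ⁻¹' W) := hW.preimage Gr.continuous_comp
    obtain ⟨O, hO, hOeq⟩ := isOpen_induced_iff.1 hopen
    have hee : Gr.comp (Gr.ident x) (Gr.ident x) = Gr.ident x := by
      have h := Gr.comp_ident (Gr.ident x)
      rwa [Gr.src_ident] at h
    have hmem : ((Gr.ident x, Gr.ident x) : G × G) ∈ O := by
      have hmem' : (⟨(Gr.ident x, Gr.ident x), hp⟩ : {pr : G × G // Gr.src pr.1 = Gr.tgt pr.2})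
          ∈ Subtype.val ⁻¹' O := by
        rw [hOeq]
        show Gr.comp (Gr.ident x) (Gr.ident x) ∈ W
        rw [hee]
        exact hidW ⟨x, rfl⟩
      exact hmem'
    obtain ⟨U₁, U₂, hU₁, hU₂, h1, h2, hsub⟩ := isOpen_prod_iff.1 hO _ _ hmem
    refine ⟨U₁ ∩ U₂, hU₁.inter hU₂, ⟨h1, h2⟩, fun g h hg hh hc => ?_⟩
    have hgO : ((g, h) : G × G) ∈ O := hsub ⟨hg.1, hh.2⟩
    have : (⟨(g, h), hc⟩ : {pr : G × G // Gr.src pr.1 = Gr.tgt pr.2})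
        ∈ Subtype.val ⁻¹' O := hgO
    rw [hOeq] at this
    exact this
  choose U hUo hUm hUc using key
  -- the open cover: the U x together with the complement of the identities
  set u : Option X → Set G := fun i => i.elim (Set.range Gr.ident)ᶜ U with hu
  have uo : ∀ i, IsOpen (u i) := by
    rintro (_ | x)
    · exact hRclosed.isOpen_compl
    · exact hUo x
  have uc : ⋃ i, u i = univ := by
    rw [Set.eq_univ_iff_forall]
    intro g
    by_cases hg : g ∈ Set.range Gr.ident
    · obtain ⟨x, rfl⟩ := hg
      exact mem_iUnion.2 ⟨some x, hUm x⟩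
    · exact mem_iUnion.2 ⟨none, hg⟩
  obtain ⟨w, wo, wmem, wbar⟩ := exists_barycentric_refinement u uo uc
  -- the candidate neighborhood of the identities
  set fs : G → G := fun g => Gr.ident (Gr.src g) with hfs
  set ft : G → G := fun g => Gr.ident (Gr.tgt g) with hft
  set W₁ : Set G := ⋃ p : G, (w p ∩ fs ⁻¹' (w p) ∩ ft ⁻¹' (w p)) with hW₁
  have hW₁open : IsOpen W₁ :=
    isOpen_iUnion fun p => ((wo p).inter ((wo p).preimage
      (Gr.continuous_ident.comp Gr.continuous_src))).inter
      ((wo p).preimage (Gr.continuous_ident.comp Gr.continuous_tgt))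
  have hW₁id : Set.range Gr.ident ⊆ W₁ := by
    rintro _ ⟨x, rfl⟩
    refine mem_iUnion.2 ⟨Gr.ident x, ⟨⟨wmem _, ?_⟩, ?_⟩⟩
    · show Gr.ident (Gr.src (Gr.ident x)) ∈ w (Gr.ident x)
      rw [Gr.src_ident]; exact wmem _
    · show Gr.ident (Gr.tgt (Gr.ident x)) ∈ w (Gr.ident x)
      rw [Gr.tgt_ident]; exact wmem _
  have hprod : ∀ g h, g ∈ W₁ → h ∈ W₁ → Gr.src g = Gr.tgt h → Gr.comp g h ∈ W := by
    intro g h hg hh hc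
    obtain ⟨p, hgp⟩ := mem_iUnion.1 hg
    obtain ⟨q, hhq⟩ := mem_iUnion.1 hh
    set z : G := Gr.ident (Gr.src g) with hz
    have hzp : z ∈ w p := hgp.1.2
    have hzq : z ∈ w q := by
      have := hhq.2
      show Gr.ident (Gr.src g) ∈ w q
      rw [hc]
      exact this
    obtain ⟨i, hi⟩ := wbar z
    have hgU : g ∈ u i := hi p hzp hgp.1.1
    have hhU : h ∈ u i := hi q hzq hhq.1.1
    have hzU : z ∈ u i := hi p hzp hzp
    cases i with
    | none => exact absurd ⟨Gr.src g, rfl⟩ hzU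
    | some x => exact hUc x g h hgU hhU hc
  refine ⟨W₁ ∩ Gr.inv ⁻¹' W₁, hW₁open.inter (hW₁open.preimage Gr.continuous_inv), ?_, ?_, ?_⟩
  · rintro _ ⟨x, rfl⟩
    refine ⟨hW₁id ⟨x, rfl⟩, ?_⟩
    show Gr.inv (Gr.ident x) ∈ W₁
    rw [Gr.inv_ident]
    exact hW₁id ⟨x, rfl⟩
  · ext g
    simp only [mem_preimage, mem_inter_iff, Gr.inv_inv]
    tauto
  · intro g h hg hh hc
    exact hprod g h hg.1 hh.1 hc
end

section
/- Let E ⊆ X² be a smooth idealistic Borel equivalence relation on a standard Borel space X, i.e., E = ker(f) for a Borel map f : X → Y to a standard Borel space, and E admits a family of proper sigma-ideals I_C of Borel subsets of each class C with the associated quantifier ∃^I mapping Borel subsets of E to Borel subsets of X. Then f(X) ⊆ Y is Borel and there exists a Borel map g : f(X) → X with f ∘ g = id on f(X). -/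
/-!
Refine the Polish topology of `X` so that `f` becomes continuous: then the classes, and `E`
itself, are closed. With a complete metric and a dense sequence `q`, shrink the class of `x`
step by step, cutting it down at step `k` to the first closed ball of radius `2⁻ᵏ` around a
point of `q` that keeps it `I`-positive; such a ball exists because countably many of them
cover the set and `I x` is a σ-ideal. The centres form a Cauchy sequence whose limit lies in
the class, depends only on the class, and is Borel in `x`, since the quantifier turns each
choice of index into a Borel condition. The fixed points of this invariant selector form a
Borel transversal on which `f` is injective, so by Lusin–Souslin `f(X)` is Borel and the
inverse of `f` on the transversal is a Borel section.
-/

open Set Metric Filter Topology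

namespace LargeSectionUniformization

variable {X Y : Type*} [PseudoMetricSpace X]

lemma exists_inter_closedBall_notMem {q : ℕ → X} (hq : DenseRange q) {J : Set (Set X)}
    (hJ : ∀ D : ℕ → Set X, (∀ n, D n ∈ J) → (⋃ n, D n) ∈ J) {A : Set X} (hA : A ∉ J)
    {r : ℝ} (hr : 0 < r) : ∃ n, A ∩ closedBall (q n) r ∉ J := by
  by_contra! hsmall
  have hcover : (⋃ n, A ∩ closedBall (q n) r) = A := by
    refine Subset.antisymm (iUnion_subset fun _ => inter_subset_left) fun y hy => ?_
    obtain ⟨n, hn⟩ := Metric.denseRange_iff.mp hq y r hr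
    exact mem_iUnion.2 ⟨n, hy, mem_closedBall.2 hn.le⟩
  exact hA (hcover ▸ hJ _ hsmall)

variable (q : ℕ → X) (f : X → Y) (I : X → Set (Set X))

noncomputable def nestedSet : ℕ → X → Set X
  | 0, x => {y | f y = f x}
  | k + 1, x => nestedSet k x ∩
      closedBall (q (sInf {n | nestedSet k x ∩ closedBall (q n) ((1 / 2 : ℝ) ^ k) ∉ I x}))
        ((1 / 2 : ℝ) ^ k)

noncomputable def ballIndex (k : ℕ) (x : X) : ℕ :=
  sInf {n | nestedSet q f I k x ∩ closedBall (q n) ((1 / 2 : ℝ) ^ k) ∉ I x}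

variable {q f I}

lemma nestedSet_zero (x : X) : nestedSet q f I 0 x = {y | f y = f x} := rfl

lemma nestedSet_succ (k : ℕ) (x : X) :
    nestedSet q f I (k + 1) x =
      nestedSet q f I k x ∩ closedBall (q (ballIndex q f I k x)) ((1 / 2 : ℝ) ^ k) := rfl

lemma nestedSet_subset (k : ℕ) (x : X) : nestedSet q f I k x ⊆ {y | f y = f x} := by
  induction k with
  | zero => exact subset_rfl
  | succ k ih => exact inter_subset_left.trans ih

lemma nestedSet_congr (hconst : ∀ x y, f x = f y → I x = I y) (k : ℕ) {x x' : X}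
    (h : f x = f x') : nestedSet q f I k x = nestedSet q f I k x' := by
  induction k with
  | zero => simp only [nestedSet_zero, h]
  | succ k ih => rw [nestedSet_succ, nestedSet_succ, ballIndex, ballIndex, ih, hconst x x' h]

lemma ballIndex_congr (hconst : ∀ x y, f x = f y → I x = I y) (k : ℕ) {x x' : X}
    (h : f x = f x') : ballIndex q f I k x = ballIndex q f I k x' := by
  rw [ballIndex, ballIndex, nestedSet_congr hconst k h, hconst x x' h]

lemma nestedSet_notMem (hq : DenseRange q)
    (hunion : ∀ x, ∀ D : ℕ → Set X, (∀ n, D n ∈ I x) → (⋃ n, D n) ∈ I x)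
    (hproper : ∀ x, {y | f y = f x} ∉ I x) (k : ℕ) (x : X) :
    nestedSet q f I k x ∉ I x := by
  induction k with
  | zero => exact hproper x
  | succ k ih =>
    exact Nat.sInf_mem (exists_inter_closedBall_notMem hq (hunion x) ih (by positivity))

lemma nestedSet_nonempty (hq : DenseRange q)
    (hunion : ∀ x, ∀ D : ℕ → Set X, (∀ n, D n ∈ I x) → (⋃ n, D n) ∈ I x)
    (hproper : ∀ x, {y | f y = f x} ∉ I x) (hempty : ∀ x, ∅ ∈ I x) (k : ℕ) (x : X) :
    (nestedSet q f I k x).Nonempty :=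
  nonempty_iff_ne_empty.2 fun h => nestedSet_notMem hq hunion hproper k x (h ▸ hempty x)

lemma dist_ballIndex_succ_le (hq : DenseRange q)
    (hunion : ∀ x, ∀ D : ℕ → Set X, (∀ n, D n ∈ I x) → (⋃ n, D n) ∈ I x)
    (hproper : ∀ x, {y | f y = f x} ∉ I x) (hempty : ∀ x, ∅ ∈ I x) (k : ℕ) (x : X) :
    dist (q (ballIndex q f I k x)) (q (ballIndex q f I (k + 1) x)) ≤ 3 / 2 * (1 / 2 : ℝ) ^ k := by
  obtain ⟨y, ⟨⟨-, hyk⟩, hyk₁⟩⟩ := nestedSet_nonempty hq hunion hproper hempty (k + 2) x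
  calc dist (q (ballIndex q f I k x)) (q (ballIndex q f I (k + 1) x))
      ≤ dist y (q (ballIndex q f I k x)) + dist y (q (ballIndex q f I (k + 1) x)) :=
        dist_triangle_left _ _ _
    _ ≤ (1 / 2 : ℝ) ^ k + (1 / 2 : ℝ) ^ (k + 1) := add_le_add hyk hyk₁
    _ = 3 / 2 * (1 / 2 : ℝ) ^ k := by ring

variable [MeasurableSpace X] [OpensMeasurableSpace X]

lemma measurable_ballIndex_of_measurableSet (hq : DenseRange q)
    (hunion : ∀ x, ∀ D : ℕ → Set X, (∀ n, D n ∈ I x) → (⋃ n, D n) ∈ I x)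
    (hproper : ∀ x, {y | f y = f x} ∉ I x)
    (hquant : ∀ U : Set (X × X), MeasurableSet U → (∀ p ∈ U, f p.1 = f p.2) →
      MeasurableSet {x | {y | (x, y) ∈ U} ∉ I x})
    {k : ℕ} (hS : MeasurableSet {p : X × X | p.2 ∈ nestedSet q f I k p.1}) :
    Measurable (ballIndex q f I k) := by
  classical
  have hex (x : X) : ∃ n, nestedSet q f I k x ∩ closedBall (q n) ((1 / 2 : ℝ) ^ k) ∉ I x :=
    exists_inter_closedBall_notMem hq (hunion x) (nestedSet_notMem hq hunion hproper k x)
      (by positivity)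
  have hball (n : ℕ) :
      MeasurableSet {x | nestedSet q f I k x ∩ closedBall (q n) ((1 / 2 : ℝ) ^ k) ∉ I x} :=
    hquant _ (hS.inter (measurable_snd measurableSet_closedBall))
      fun p hp => (nestedSet_subset k p.1 hp.1).symm
  convert measurable_find hex hball using 1
  funext x
  exact le_antisymm (Nat.sInf_le (Nat.find_spec (hex x))) (Nat.find_min' _ (Nat.sInf_mem (hex x)))

lemma measurable_ballIndex (hq : DenseRange q)
    (hunion : ∀ x, ∀ D : ℕ → Set X, (∀ n, D n ∈ I x) → (⋃ n, D n) ∈ I x)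
    (hproper : ∀ x, {y | f y = f x} ∉ I x)
    (hquant : ∀ U : Set (X × X), MeasurableSet U → (∀ p ∈ U, f p.1 = f p.2) →
      MeasurableSet {x | {y | (x, y) ∈ U} ∉ I x})
    (hE : MeasurableSet {p : X × X | f p.1 = f p.2}) (k : ℕ) :
    Measurable (ballIndex q f I k) := by
  suffices hS : MeasurableSet {p : X × X | p.2 ∈ nestedSet q f I k p.1} from
    measurable_ballIndex_of_measurableSet hq hunion hproper hquant hS
  induction k with
  | zero => exact measurable_swap hE
  | succ k ih =>
    have hgraph : {p : X × X | p.2 ∈ nestedSet q f I (k + 1) p.1} =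
        {p : X × X | p.2 ∈ nestedSet q f I k p.1} ∩
          ⋃ m, {x | ballIndex q f I k x = m} ×ˢ closedBall (q m) ((1 / 2 : ℝ) ^ k) := by
      ext p
      simp [nestedSet_succ]
    rw [hgraph]
    exact ih.inter <| .iUnion fun m =>
      (measurable_ballIndex_of_measurableSet hq hunion hproper hquant ih
        (measurableSet_singleton m)).prod measurableSet_closedBall

theorem exists_invariant_selector {X Y : Type*} [MetricSpace X] [CompleteSpace X]
    [SecondCountableTopology X] [MeasurableSpace X] [BorelSpace X] {f : X → Y}
    (hE : IsClosed {p : X × X | f p.1 = f p.2}) {I : X → Set (Set X)}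
    (hconst : ∀ x y, f x = f y → I x = I y) (hempty : ∀ x, ∅ ∈ I x)
    (hunion : ∀ x, ∀ D : ℕ → Set X, (∀ n, D n ∈ I x) → (⋃ n, D n) ∈ I x)
    (hproper : ∀ x, {y | f y = f x} ∉ I x)
    (hquant : ∀ U : Set (X × X), MeasurableSet U → (∀ p ∈ U, f p.1 = f p.2) →
      MeasurableSet {x | {y | (x, y) ∈ U} ∉ I x}) :
    ∃ g : X → X, Measurable g ∧ (∀ x, f (g x) = f x) ∧ ∀ x y, f x = f y → g x = g y := by
  rcases isEmpty_or_nonempty X with hX | hX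
  · exact ⟨id, measurable_id, fun _ => rfl, fun x => isEmptyElim x⟩
  obtain ⟨q, hq⟩ := TopologicalSpace.exists_dense_seq X
  have hcauchy (x : X) : CauchySeq fun k => q (ballIndex q f I k x) :=
    cauchySeq_of_le_geometric (1 / 2) (3 / 2) (by norm_num)
      (dist_ballIndex_succ_le hq hunion hproper hempty · x)
  choose g hg using fun x => cauchySeq_tendsto_of_complete (hcauchy x)
  refine ⟨g, ?_, fun x => ?_, fun x x' h => ?_⟩
  · have hc (k : ℕ) : Measurable fun x => q (ballIndex q f I k x) :=
      measurable_from_top.comp (measurable_ballIndex hq hunion hproper hquant hE.measurableSet k)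
    exact measurable_of_tendsto_metrizable hc (tendsto_pi_nhds.2 hg)
  · -- `g x` is also the limit of points of the nested sets, which lie in the closed class.
    choose y hy using fun k => nestedSet_nonempty hq hunion hproper hempty (k + 1) x
    have hdist : Tendsto (fun k => dist (q (ballIndex q f I k x)) (y k)) atTop (𝓝 0) :=
      squeeze_zero (fun _ => dist_nonneg) (fun k => mem_closedBall'.1 (hy k).2)
        (tendsto_pow_atTop_nhds_zero_of_lt_one (r := (1 / 2 : ℝ)) (by norm_num) (by norm_num))
    have hclass : IsClosed {z | f z = f x} := hE.preimage (continuous_id.prodMk continuous_const)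
    exact hclass.mem_of_tendsto ((hg x).congr_dist hdist)
      (.of_forall fun k => nestedSet_subset (k + 1) x (hy k))
  · have hseq : (fun k => q (ballIndex q f I k x)) = fun k => q (ballIndex q f I k x') :=
      funext fun k => by rw [ballIndex_congr hconst k h]
    exact tendsto_nhds_unique (hg x) (hseq ▸ hg x')

end LargeSectionUniformization

theorem exists_measurable_section_of_selector {X Y : Type*} [MeasurableSpace X]
    [StandardBorelSpace X] [MeasurableSpace Y] [MeasurableSpace.CountablySeparated Y]
    {f : X → Y} (hf : Measurable f) {g : X → X} (hg : Measurable g) (hfg : ∀ x, f (g x) = f x)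
    (hg_inv : ∀ x y, f x = f y → g x = g y) :
    MeasurableSet (range f) ∧ ∃ s : range f → X, Measurable s ∧ ∀ y : range f, f (s y) = y := by
  let T : Set X := {x | g x = x}
  have hgT (x : X) : g x ∈ T := hg_inv (g x) x (hfg x)
  have : StandardBorelSpace T := (measurableSet_eq_fun hg measurable_id).standardBorel
  have hF : MeasurableEmbedding fun t : T => f t := by
    refine (hf.comp measurable_subtype_coe).measurableEmbedding fun t t' h => Subtype.ext ?_
    rw [← t.2, ← t'.2]
    exact hg_inv t t' h
  have hrange : range (fun t : T => f t) = range f := by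
    refine Subset.antisymm (range_subset_iff.2 fun t => mem_range_self _) ?_
    rintro _ ⟨x, rfl⟩
    exact ⟨⟨g x, hgT x⟩, hfg x⟩
  have hmem (y : range f) : (y : Y) ∈ range (fun t : T => f t) := by rw [hrange]; exact y.2
  refine ⟨hrange ▸ hF.measurableSet_range, fun y => hF.equivRange.symm ⟨y, hmem y⟩, ?_, fun y => ?_⟩
  · exact measurable_subtype_coe.comp
      (hF.equivRange.symm.measurable.comp (measurable_subtype_coe.subtype_mk))
  · have := congrArg Subtype.val (hF.equivRange.apply_symm_apply ⟨y, hmem y⟩)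
    rwa [hF.equivRange_apply] at this

theorem StandardBorelSpace.exists_polishSpace_continuous {X Y : Type*} [MeasurableSpace X]
    [StandardBorelSpace X] [TopologicalSpace Y] [SecondCountableTopology Y] [MeasurableSpace Y]
    [OpensMeasurableSpace Y] {f : X → Y} (hf : Measurable f) :
    ∃ t : TopologicalSpace X, PolishSpace (h := t) ∧ @BorelSpace X t _ ∧ Continuous[t, _] f := by
  let := upgradeStandardBorel X
  obtain ⟨t, hle, hcont, hpolish⟩ := hf.exists_continuous
  refine ⟨t, hpolish, ⟨?_⟩, hcont⟩
  exact (eq_borel_upgradeStandardBorel X).trans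
    (MeasureTheory.borel_eq_borel_of_le hpolish (upgradeStandardBorel X).toPolishSpace hle).symm

theorem stmt_19_general {X Y : Type*} [MeasurableSpace X] [StandardBorelSpace X]
    [MeasurableSpace Y] [StandardBorelSpace Y]
    (f : X → Y) (hf : Measurable f)
    (I : X → Set (Set X))
    (hconst : ∀ x y, f x = f y → I x = I y)
    (hempty : ∀ x, ∅ ∈ I x)
    (hunion : ∀ x, ∀ D : ℕ → Set X, (∀ n, D n ∈ I x) → (⋃ n, D n) ∈ I x)
    (hproper : ∀ x, {y | f y = f x} ∉ I x)
    (hquant : ∀ U : Set (X × X), MeasurableSet U → (∀ q ∈ U, f q.1 = f q.2) →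
      MeasurableSet {x | {y | (x, y) ∈ U} ∉ I x}) :
    MeasurableSet (Set.range f) ∧
      ∃ g : Set.range f → X, Measurable g ∧ ∀ y : Set.range f, f (g y) = (y : Y) := by
  let := upgradeStandardBorel Y
  obtain ⟨t, _, _, hcont⟩ := StandardBorelSpace.exists_polishSpace_continuous hf
  let := TopologicalSpace.upgradeIsCompletelyMetrizable X
  obtain ⟨g, hg, hfg, hg_inv⟩ := LargeSectionUniformization.exists_invariant_selector
    (isClosed_eq (hcont.comp continuous_fst) (hcont.comp continuous_snd)) hconst hempty hunion
    hproper hquant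
  exact exists_measurable_section_of_selector hf hg hfg hg_inv

/-- Kechris's large section uniformization. Let `E = ker f` be a
smooth Borel equivalence relation on a standard Borel space `X`, where
`f : X → Y` is Borel into a standard Borel space. Suppose `E` is idealistic, as
witnessed by a family `I x` of proper sigma-ideals of Borel subsets of each class
`[x]_E = {y : f y = f x}` (constant on classes), whose associated quantifier maps
Borel subsets of `E` to Borel subsets of `X`. Then `f(X) ⊆ Y` is Borel, and there
is a Borel section `g : f(X) → X` with `f ∘ g = id`. -/
theorem stmt_19 {X Y : Type*} [MeasurableSpace X] [StandardBorelSpace X]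
    [MeasurableSpace Y] [StandardBorelSpace Y]
    (f : X → Y) (hf : Measurable f)
    (I : X → Set (Set X))
    (hclass : ∀ x, ∀ D ∈ I x, D ⊆ {y | f y = f x})
    (hconst : ∀ x y, f x = f y → I x = I y)
    (hborel : ∀ x, ∀ D ∈ I x, MeasurableSet D)
    (hempty : ∀ x, ∅ ∈ I x)
    (hdown : ∀ x, ∀ D ∈ I x, ∀ D' : Set X, D' ⊆ D → MeasurableSet D' → D' ∈ I x)
    (hunion : ∀ x, ∀ D : ℕ → Set X, (∀ n, D n ∈ I x) → (⋃ n, D n) ∈ I x)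
    (hproper : ∀ x, {y | f y = f x} ∉ I x)
    (hquant : ∀ U : Set (X × X), MeasurableSet U → (∀ q ∈ U, f q.1 = f q.2) →
      MeasurableSet {x | {y | (x, y) ∈ U} ∉ I x}) :
    MeasurableSet (Set.range f) ∧
      ∃ g : Set.range f → X, Measurable g ∧ ∀ y : Set.range f, f (g y) = (y : Y) :=
  stmt_19_general f hf I hconst hempty hunion hproper hquant
end
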